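/- arXiv:1404.3453 — 11 statements merged into one kernel-verified Lean document; each statement's English description precedes it below -/
import Mathlib

section
/- Let m, n be positive integers and let A and B be m×n complex matrices such that A Bᴴ = I_m (where Bᴴ denotes the conjugate transpose). Then the m×m matrix B Bᴴ is invertible, the matrix A Aᴴ − (B Bᴴ)⁻¹ is positive semidefinite, and moreover A Aᴴ = (B Bᴴ)⁻¹ holds if and only if A = (B Bᴴ)⁻¹ B. -/
/-!
Since `B * Aᴴ = 1`, the map `v ↦ v ᵥ* B` has a left inverse, so the Gram matrix
`G = B * Bᴴ` is positive definite. With `D = A - G⁻¹ * B`, expanding and using `A * Bᴴ = 1`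
gives `D * Dᴴ = A * Aᴴ - G⁻¹`: the difference is a Gram matrix, hence positive semidefinite,
and it vanishes exactly when `D = 0`.
-/

open Matrix ComplexOrder

namespace Matrix

variable {m n R : Type*} [Fintype n]

lemma vecMul_injective_of_mul_eq_one [Fintype m] [DecidableEq m] [Semiring R] {B : Matrix m n R}
    {C : Matrix n m R} (h : B * C = 1) : Function.Injective B.vecMul := fun v w hvw => by
  simpa only [vecMul_vecMul, h, vecMul_one] using congrArg (· ᵥ* C) hvw

lemma mul_conjTranspose_eq_one_symm [DecidableEq m] [Semiring R] [StarRing R]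
    {A B : Matrix m n R} (h : A * Bᴴ = 1) : B * Aᴴ = 1 := by
  rw [← conjTranspose_conjTranspose B, ← conjTranspose_mul, h, conjTranspose_one]

lemma mul_conjTranspose_sub_inv_mul_eq [Fintype m] [DecidableEq m] [CommRing R] [StarRing R]
    {A B : Matrix m n R} (h : A * Bᴴ = 1) (hB : IsUnit (B * Bᴴ)) :
    (A - (B * Bᴴ)⁻¹ * B) * (A - (B * Bᴴ)⁻¹ * B)ᴴ = A * Aᴴ - (B * Bᴴ)⁻¹ := by
  have hGinv : (B * Bᴴ)⁻¹ᴴ = (B * Bᴴ)⁻¹ := by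
    rw [conjTranspose_nonsing_inv, conjTranspose_mul, conjTranspose_conjTranspose]
  have hGG : B * Bᴴ * (B * Bᴴ)⁻¹ = 1 := mul_nonsing_inv _ ((isUnit_iff_isUnit_det _).mp hB)
  simp only [conjTranspose_sub, conjTranspose_mul, hGinv, Matrix.sub_mul, Matrix.mul_sub,
    Matrix.mul_assoc]
  rw [← Matrix.mul_assoc A, h, ← Matrix.mul_assoc B, hGG, mul_conjTranspose_eq_one_symm h,
    Matrix.one_mul, Matrix.mul_one]
  abel

variable {𝕜 : Type*} [RCLike 𝕜]

lemma posDef_mul_conjTranspose_of_mul_conjTranspose_eq_one [Fintype m] [DecidableEq m]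
    {A B : Matrix m n 𝕜} (h : A * Bᴴ = 1) : (B * Bᴴ).PosDef :=
  PosDef.mul_conjTranspose_self B (vecMul_injective_of_mul_eq_one (mul_conjTranspose_eq_one_symm h))

end Matrix

theorem stmt_0_general (m n : ℕ)
    (A B : Matrix (Fin m) (Fin n) ℂ) (h : A * Bᴴ = 1) :
    IsUnit (B * Bᴴ) ∧
    (A * Aᴴ - (B * Bᴴ)⁻¹).PosSemidef ∧
    (A * Aᴴ = (B * Bᴴ)⁻¹ ↔ A = (B * Bᴴ)⁻¹ * B) := by
  have hG : IsUnit (B * Bᴴ) := (posDef_mul_conjTranspose_of_mul_conjTranspose_eq_one h).isUnit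
  have hgram := mul_conjTranspose_sub_inv_mul_eq h hG
  refine ⟨hG, hgram ▸ posSemidef_self_mul_conjTranspose _, ?_⟩
  rw [← sub_eq_zero, ← hgram, self_mul_conjTranspose_eq_zero, sub_eq_zero]

/-- Invertible case of Lemma 1: if `A * Bᴴ = 1`, then `B * Bᴴ` is invertible,
`A * Aᴴ - (B * Bᴴ)⁻¹` is positive semidefinite, and equality
`A * Aᴴ = (B * Bᴴ)⁻¹` holds iff `A = (B * Bᴴ)⁻¹ * B`. -/
theorem stmt_0 (m n : ℕ) (hm : 0 < m) (hn : 0 < n)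
    (A B : Matrix (Fin m) (Fin n) ℂ) (h : A * Bᴴ = 1) :
    IsUnit (B * Bᴴ) ∧
    (A * Aᴴ - (B * Bᴴ)⁻¹).PosSemidef ∧
    (A * Aᴴ = (B * Bᴴ)⁻¹ ↔ A = (B * Bᴴ)⁻¹ * B) :=
  stmt_0_general m n A B h
end

section
/- Let d, m ≥ 1, let Π : Fin m → (d×d complex matrices) be Hermitian positive semidefinite matrices with ∑_ξ Π_ξ = I, and let ρ be a Hermitian positive definite d×d matrix with tr ρ = 1. Set p_ξ := tr(Π_ξ ρ) and assume p_ξ > 0 for every ξ. Suppose Θ : Fin m → (d×d Hermitian matrices) satisfies the dual-frame condition ∑_ξ tr(Π_ξ X) Θ_ξ = X for every Hermitian matrix X. Define the ℝ-linear map F on the real vector space of d×d Hermitian matrices by F(X) = ∑_ξ p_ξ⁻¹ tr(Π_ξ X) Π_ξ. Then F is bijective, and for every Hermitian matrix X one has ∑_ξ p_ξ (tr(Θ_ξ X))² ≥ tr(X · F⁻¹(X)). -/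
open Matrix ComplexOrder

/-!
On Hermitian matrices `tr (X * F X) = ∑ ξ, tr (P ξ * X)² / p ξ`, and by the reconstruction
identity this vanishes only at `X = 0`; so `F` is injective, hence bijective, on the
finite-dimensional real space of Hermitian matrices. For `X = F Y` put
`a ξ = tr (P ξ * Y)` and `b ξ = tr (Θ ξ * X)`: then `tr (X * Y) = ∑ a² / p`, while the
reconstruction identity applied to `Y` gives `tr (X * Y) = ∑ a b`. Expanding
`0 ≤ ∑ p (b - a / p)²` yields `tr (X * Y) ≤ ∑ p b²`.
-/

theorem Finset.sum_sq_div_le_sum_mul_sq_of_sum_mul_eq {ι : Type*} (s : Finset ι)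
    {p a b : ι → ℝ} (hp : ∀ i ∈ s, 0 < p i) (h : ∑ i ∈ s, a i * b i = ∑ i ∈ s, a i ^ 2 / p i) :
    ∑ i ∈ s, a i ^ 2 / p i ≤ ∑ i ∈ s, p i * b i ^ 2 := by
  have hsq : 0 ≤ ∑ i ∈ s, p i * (b i - a i / p i) ^ 2 :=
    Finset.sum_nonneg fun i hi => mul_nonneg (hp i hi).le (sq_nonneg _)
  have hexpand : ∑ i ∈ s, p i * (b i - a i / p i) ^ 2
      = ∑ i ∈ s, p i * b i ^ 2 - 2 * ∑ i ∈ s, a i * b i + ∑ i ∈ s, a i ^ 2 / p i := by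
    rw [Finset.mul_sum, ← Finset.sum_sub_distrib, ← Finset.sum_add_distrib]
    refine Finset.sum_congr rfl fun i hi => ?_
    field_simp [(hp i hi).ne']
    ring
  linarith

namespace Matrix

variable {ι n : Type*} [Fintype ι] [Fintype n]

theorem IsHermitian.ofReal_re_trace_mul {A B : Matrix n n ℂ} (hA : A.IsHermitian)
    (hB : B.IsHermitian) : (((A * B).trace.re : ℝ) : ℂ) = (A * B).trace := by
  refine Complex.conj_eq_iff_re.mp ?_
  rw [starRingEnd_apply, ← trace_conjTranspose, conjTranspose_mul, hA.eq, hB.eq,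
    trace_mul_comm]

noncomputable def frameOp (P : ι → Matrix n n ℂ) (p : ι → ℝ) : Matrix n n ℂ →ₗ[ℂ] Matrix n n ℂ :=
  ∑ ξ, (p ξ : ℂ)⁻¹ • ((traceLinearMap n ℂ ℂ ∘ₗ LinearMap.mulLeft ℂ (P ξ)).smulRight (P ξ))

variable {P : ι → Matrix n n ℂ} {p : ι → ℝ}

theorem frameOp_apply (X : Matrix n n ℂ) :
    frameOp P p X = ∑ ξ, ((p ξ : ℂ)⁻¹ * (P ξ * X).trace) • P ξ := by
  simp [frameOp, smul_smul]

theorem trace_mul_frameOp (X Y : Matrix n n ℂ) :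
    (X * frameOp P p Y).trace = ∑ ξ, (p ξ : ℂ)⁻¹ * (P ξ * Y).trace * (P ξ * X).trace := by
  rw [frameOp_apply, Matrix.mul_sum, trace_sum]
  simp only [Matrix.mul_smul, trace_smul, smul_eq_mul, trace_mul_comm X]

variable (hP : ∀ ξ, (P ξ).IsHermitian)
include hP

theorem re_trace_mul_frameOp_self {X : Matrix n n ℂ} (hX : X.IsHermitian) :
    (X * frameOp P p X).trace.re = ∑ ξ, (P ξ * X).trace.re ^ 2 / p ξ := by
  rw [trace_mul_frameOp, Complex.re_sum]
  refine Finset.sum_congr rfl fun ξ _ => ?_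
  rw [← (hP ξ).ofReal_re_trace_mul hX]
  norm_cast
  ring

theorem IsHermitian.frameOp {X : Matrix n n ℂ} (hX : X.IsHermitian) :
    (frameOp P p X).IsHermitian := by
  rw [frameOp_apply]
  refine isSelfAdjoint_sum _ fun ξ _ => (hP ξ).smul ?_
  rw [← (hP ξ).ofReal_re_trace_mul hX, ← Complex.ofReal_inv, ← Complex.ofReal_mul]
  exact Complex.conj_ofReal _

variable {Θ : ι → Matrix n n ℂ} (hp : ∀ ξ, 0 < p ξ)
  (hdual : ∀ X : Matrix n n ℂ, X.IsHermitian → ∑ ξ, (P ξ * X).trace • Θ ξ = X)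

include hp hdual in
theorem eq_zero_of_frameOp_eq_zero {X : Matrix n n ℂ} (hX : X.IsHermitian)
    (h : frameOp P p X = 0) : X = 0 := by
  have hsum : ∑ ξ, (P ξ * X).trace.re ^ 2 / p ξ = 0 := by
    rw [← re_trace_mul_frameOp_self hP hX, h, Matrix.mul_zero, trace_zero, Complex.zero_re]
  have htrace (ξ : ι) : (P ξ * X).trace = 0 := by
    have hterm := (Finset.sum_eq_zero_iff_of_nonneg fun ξ _ =>
      div_nonneg (sq_nonneg _) (hp ξ).le).mp hsum ξ (Finset.mem_univ ξ)
    rw [div_eq_zero_iff, or_iff_left (hp ξ).ne', sq_eq_zero_iff] at hterm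
    rw [← (hP ξ).ofReal_re_trace_mul hX, hterm, Complex.ofReal_zero]
  rw [← hdual X hX]
  simp [htrace]

include hp hdual in
theorem bijOn_frameOp :
    Set.BijOn (frameOp P p) {X | X.IsHermitian} {X | X.IsHermitian} := by
  have hinj : Set.InjOn (frameOp P p) {X | X.IsHermitian} := fun X hX Y hY hXY =>
    sub_eq_zero.mp <| eq_zero_of_frameOp_eq_zero hP hp hdual (hX.sub hY)
      (by rw [map_sub, hXY, sub_self])
  let H := selfAdjoint.submodule ℝ (Matrix n n ℂ)
  let F : H →ₗ[ℝ] H := ((frameOp P p).restrictScalars ℝ).restrict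
    fun X (hX : X.IsHermitian) => hX.frameOp hP
  have hF : Function.Surjective F := LinearMap.injective_iff_surjective.mp
    fun X Y hXY => Subtype.ext (hinj X.2 Y.2 (congrArg Subtype.val hXY))
  refine ⟨fun X hX => hX.frameOp hP, hinj, fun Y hY => ?_⟩
  obtain ⟨X, hX⟩ := hF ⟨Y, hY⟩
  exact ⟨X, X.2, congrArg Subtype.val hX⟩

include hp hdual in
theorem re_trace_mul_le_sum_mul_sq (hΘ : ∀ ξ, (Θ ξ).IsHermitian) {X Y : Matrix n n ℂ}
    (hX : X.IsHermitian) (hY : Y.IsHermitian) (hXY : frameOp P p Y = X) :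
    (X * Y).trace.re ≤ ∑ ξ, p ξ * (Θ ξ * X).trace.re ^ 2 := by
  have hframe : (X * Y).trace.re = ∑ ξ, (P ξ * Y).trace.re ^ 2 / p ξ := by
    rw [trace_mul_comm, ← hXY, re_trace_mul_frameOp_self hP hY]
  have hdualY : (X * Y).trace.re = ∑ ξ, (P ξ * Y).trace.re * (Θ ξ * X).trace.re := by
    conv_lhs => rw [← hdual Y hY]
    rw [Matrix.mul_sum, trace_sum, Complex.re_sum]
    refine Finset.sum_congr rfl fun ξ _ => ?_
    rw [Matrix.mul_smul, trace_smul, smul_eq_mul, trace_mul_comm X,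
      ← (hP ξ).ofReal_re_trace_mul hY, ← (hΘ ξ).ofReal_re_trace_mul hX]
    norm_cast
  rw [hframe]
  exact Finset.univ.sum_sq_div_le_sum_mul_sq_of_sum_mul_eq (fun ξ _ => hp ξ)
    (hdualY.symm.trans hframe)

end Matrix

theorem stmt_2_general (d m : ℕ)
    (P : Fin m → Matrix (Fin d) (Fin d) ℂ)
    (hP : ∀ ξ, (P ξ).PosSemidef)
    (p : Fin m → ℝ) (hppos : ∀ ξ, 0 < p ξ)
    (Θ : Fin m → Matrix (Fin d) (Fin d) ℂ) (hΘ : ∀ ξ, (Θ ξ).IsHermitian)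
    (hdual : ∀ X : Matrix (Fin d) (Fin d) ℂ, X.IsHermitian →
      ∑ ξ, ((P ξ * X).trace) • Θ ξ = X)
    (F : Matrix (Fin d) (Fin d) ℂ → Matrix (Fin d) (Fin d) ℂ)
    (hF : ∀ X, F X = ∑ ξ, (((p ξ : ℂ))⁻¹ * (P ξ * X).trace) • P ξ) :
    (∀ Y : Matrix (Fin d) (Fin d) ℂ, Y.IsHermitian →
      ∃! X : Matrix (Fin d) (Fin d) ℂ, X.IsHermitian ∧ F X = Y) ∧
    (∀ X Y : Matrix (Fin d) (Fin d) ℂ, X.IsHermitian → Y.IsHermitian → F Y = X →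
      ∑ ξ, p ξ * ((Θ ξ * X).trace.re) ^ 2 ≥ ((X * Y).trace).re) := by
  have hPh (ξ : Fin m) : (P ξ).IsHermitian := (hP ξ).isHermitian
  obtain rfl : F = frameOp P p := funext fun X => by rw [hF, frameOp_apply]
  have hbij := bijOn_frameOp hPh hppos hdual
  refine ⟨fun Y hY => ?_, fun X Y hX hY hXY =>
    re_trace_mul_le_sum_mul_sq hPh hppos hdual hΘ hX hY hXY⟩
  obtain ⟨X, hX, hXY⟩ := hbij.surjOn hY
  exact ⟨X, ⟨hX, hXY⟩, fun Z hZ => hbij.injOn hZ.1 hX (hZ.2.trans hXY.symm)⟩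

/-- Lower bound `C(ρ) ≥ F(ρ)⁻¹ - |ρ⟩⟩⟨⟨ρ|` on the (second-moment) MSE matrix:
for any POVM `P`, full-rank state `ρ` with probabilities `p ξ = tr(P ξ ρ) > 0`,
and reconstruction operators `Θ` with `∑ ξ, tr(P ξ X) • Θ ξ = X` for Hermitian `X`,
the frame superoperator `F X = ∑ ξ, p ξ⁻¹ tr(P ξ X) • P ξ` is bijective on the
real space of Hermitian matrices, and
`∑ ξ, p ξ * (tr(Θ ξ X))² ≥ tr(X * F⁻¹ X)` for every Hermitian `X`. -/
theorem stmt_2 (d m : ℕ) (hd : 1 ≤ d) (hm : 1 ≤ m)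
    (P : Fin m → Matrix (Fin d) (Fin d) ℂ)
    (hP : ∀ ξ, (P ξ).PosSemidef) (hPsum : ∑ ξ, P ξ = 1)
    (ρ : Matrix (Fin d) (Fin d) ℂ) (hρ : ρ.PosDef) (hρtr : ρ.trace = 1)
    (p : Fin m → ℝ) (hp : ∀ ξ, (p ξ : ℂ) = (P ξ * ρ).trace) (hppos : ∀ ξ, 0 < p ξ)
    (Θ : Fin m → Matrix (Fin d) (Fin d) ℂ) (hΘ : ∀ ξ, (Θ ξ).IsHermitian)
    (hdual : ∀ X : Matrix (Fin d) (Fin d) ℂ, X.IsHermitian →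
      ∑ ξ, ((P ξ * X).trace) • Θ ξ = X)
    (F : Matrix (Fin d) (Fin d) ℂ → Matrix (Fin d) (Fin d) ℂ)
    (hF : ∀ X, F X = ∑ ξ, (((p ξ : ℂ))⁻¹ * (P ξ * X).trace) • P ξ) :
    (∀ Y : Matrix (Fin d) (Fin d) ℂ, Y.IsHermitian →
      ∃! X : Matrix (Fin d) (Fin d) ℂ, X.IsHermitian ∧ F X = Y) ∧
    (∀ X Y : Matrix (Fin d) (Fin d) ℂ, X.IsHermitian → Y.IsHermitian → F Y = X →
      ∑ ξ, p ξ * ((Θ ξ * X).trace.re) ^ 2 ≥ ((X * Y).trace).re) :=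
  stmt_2_general d m P hP p hppos Θ hΘ hdual F hF
end

section
/- Let d, m ≥ 1, let Π : Fin m → (d×d complex matrices) be Hermitian positive semidefinite with ∑_ξ Π_ξ = I, let ρ be Hermitian positive definite with tr ρ = 1, set p_ξ := tr(Π_ξ ρ) and assume p_ξ > 0 for every ξ, and let F(X) = ∑_ξ p_ξ⁻¹ tr(Π_ξ X) Π_ξ be the (bijective) frame superoperator on Hermitian matrices. Suppose Θ : Fin m → (d×d Hermitian matrices) satisfies ∑_ξ tr(Π_ξ X) Θ_ξ = X for every Hermitian X. Then the equality ∑_ξ p_ξ (tr(Θ_ξ X))² = tr(X · F⁻¹(X)) holds for every Hermitian matrix X if and only if Θ_ξ = p_ξ⁻¹ F⁻¹(Π_ξ) for every ξ. -/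
open Matrix ComplexOrder
open scoped BigOperators

private lemma trace_herm_im {d : ℕ} (A B : Matrix (Fin d) (Fin d) ℂ)
    (hA : A.IsHermitian) (hB : B.IsHermitian) : ((A * B).trace).im = 0 := by
  have : (starRingEnd ℂ) ((A * B).trace) = (A * B).trace := by
    calc (starRingEnd ℂ) ((A * B).trace) = ((A * B)ᴴ).trace := (Matrix.trace_conjTranspose _).symm
    _ = (Bᴴ * Aᴴ).trace := by rw [conjTranspose_mul]
    _ = (B * A).trace := by rw [hA.eq, hB.eq]
    _ = (A * B).trace := Matrix.trace_mul_comm _ _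
  exact Complex.conj_eq_iff_im.mp this

private lemma eq_zero_of_trace_sq {d : ℕ} (A : Matrix (Fin d) (Fin d) ℂ)
    (hA : A.IsHermitian) (h : (A * A).trace = 0) : A = 0 := by
  have h' : (Aᴴ * A).trace = 0 := by rw [hA.eq]; exact h
  have h1 : (Aᴴ * A).trace = ∑ j, ∑ i, ((Complex.normSq (A i j) : ℝ) : ℂ) := by
    simp [Matrix.trace, Matrix.diag, Matrix.mul_apply, Matrix.conjTranspose_apply,
      Complex.normSq_eq_conj_mul_self]
  rw [h1] at h'
  have h2 : ∑ j, ∑ i, Complex.normSq (A i j) = 0 := by exact_mod_cast h'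
  ext i j
  have hj := (Finset.sum_eq_zero_iff_of_nonneg
    (fun j _ => Finset.sum_nonneg fun i _ => Complex.normSq_nonneg _)).mp h2 j (Finset.mem_univ j)
  have hi := (Finset.sum_eq_zero_iff_of_nonneg
    (fun i _ => Complex.normSq_nonneg _)).mp hj i (Finset.mem_univ i)
  simpa [Complex.normSq_eq_zero] using hi

/-- Saturation condition for the MSE-matrix lower bound: with `G = F⁻¹` the inverse
of the frame superoperator, the equality
`∑ ξ, p ξ * (tr(Θ ξ X))² = tr(X * F⁻¹ X)` holds for every Hermitian `X`
iff `Θ ξ = p ξ⁻¹ • F⁻¹(P ξ)` for every `ξ` (the optimal reconstruction operators). -/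
theorem stmt_3 (d m : ℕ) (hd : 1 ≤ d) (hm : 1 ≤ m)
    (P : Fin m → Matrix (Fin d) (Fin d) ℂ)
    (hP : ∀ ξ, (P ξ).PosSemidef) (hPsum : ∑ ξ, P ξ = 1)
    (ρ : Matrix (Fin d) (Fin d) ℂ) (hρ : ρ.PosDef) (hρtr : ρ.trace = 1)
    (p : Fin m → ℝ) (hp : ∀ ξ, (p ξ : ℂ) = (P ξ * ρ).trace) (hppos : ∀ ξ, 0 < p ξ)
    (F G : Matrix (Fin d) (Fin d) ℂ → Matrix (Fin d) (Fin d) ℂ)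
    (hF : ∀ X, F X = ∑ ξ, (((p ξ : ℂ))⁻¹ * (P ξ * X).trace) • P ξ)
    (hGF : ∀ X, G (F X) = X) (hFG : ∀ X, F (G X) = X)
    (Θ : Fin m → Matrix (Fin d) (Fin d) ℂ) (hΘ : ∀ ξ, (Θ ξ).IsHermitian)
    (hdual : ∀ X : Matrix (Fin d) (Fin d) ℂ, X.IsHermitian →
      ∑ ξ, ((P ξ * X).trace) • Θ ξ = X) :
    (∀ X : Matrix (Fin d) (Fin d) ℂ, X.IsHermitian →
        ∑ ξ, p ξ * ((Θ ξ * X).trace.re) ^ 2 = ((X * G X).trace).re) ↔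
      (∀ ξ, Θ ξ = ((p ξ : ℂ))⁻¹ • G (P ξ)) := by
  have hpne : ∀ ξ, ((p ξ : ℂ)) ≠ 0 := fun ξ => by exact_mod_cast (hppos ξ).ne'
  -- linearity of F
  have hFadd : ∀ X Y, F (X + Y) = F X + F Y := by
    intro X Y
    rw [hF, hF, hF, ← Finset.sum_add_distrib]
    refine Finset.sum_congr rfl fun ξ _ => ?_
    rw [Matrix.mul_add, Matrix.trace_add, mul_add, add_smul]
  have hFsmul : ∀ (c : ℂ) X, F (c • X) = c • F X := by
    intro c X
    rw [hF, hF, Finset.smul_sum]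
    refine Finset.sum_congr rfl fun ξ _ => ?_
    rw [Matrix.mul_smul, Matrix.trace_smul, smul_smul, smul_eq_mul]
    congr 1
    ring
  -- linearity of G
  have hGadd : ∀ X Y, G (X + Y) = G X + G Y := by
    intro X Y
    conv_lhs => rw [← hFG X, ← hFG Y, ← hFadd, hGF]
  have hGsmul : ∀ (c : ℂ) X, G (c • X) = c • G X := by
    intro c X
    conv_lhs => rw [← hFG X, ← hFsmul, hGF]
  have hGsum : ∀ (f : Fin m → Matrix (Fin d) (Fin d) ℂ),
      G (∑ ξ, f ξ) = ∑ ξ, G (f ξ) := by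
    intro f
    let Glin : Matrix (Fin d) (Fin d) ℂ →ₗ[ℂ] Matrix (Fin d) (Fin d) ℂ :=
      { toFun := G, map_add' := hGadd, map_smul' := hGsmul }
    exact map_sum Glin f Finset.univ
  -- conjTranspose commutation
  have hstar : ∀ (X : Matrix (Fin d) (Fin d) ℂ) ξ,
      star ((P ξ * X).trace) = (P ξ * Xᴴ).trace := by
    intro X ξ
    rw [← Matrix.trace_conjTranspose, conjTranspose_mul, (hP ξ).1.eq, Matrix.trace_mul_comm]
  have hFconj : ∀ X, (F X)ᴴ = F Xᴴ := by
    intro X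
    rw [hF X, hF Xᴴ, Matrix.conjTranspose_sum]
    refine Finset.sum_congr rfl fun ξ _ => ?_
    rw [Matrix.conjTranspose_smul, (hP ξ).1.eq]
    congr 1
    rw [star_mul', hstar]
    congr 1
    rw [← Complex.ofReal_inv]
    exact Complex.conj_ofReal _
  have hGconj : ∀ X, (G X)ᴴ = G Xᴴ := by
    intro X
    conv_rhs => rw [← hFG X, hFconj, hGF]
  have hGXherm : ∀ X : Matrix (Fin d) (Fin d) ℂ, X.IsHermitian → (G X).IsHermitian :=
    fun X hX => (hGconj X).trans (congrArg G hX.eq)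
  -- self-adjointness
  have htrF : ∀ X Y, (F X * Y).trace
      = ∑ ξ, ((p ξ : ℂ))⁻¹ * (P ξ * X).trace * (P ξ * Y).trace := by
    intro X Y
    rw [hF X, Finset.sum_mul, Matrix.trace_sum]
    refine Finset.sum_congr rfl fun ξ _ => ?_
    rw [smul_mul_assoc, Matrix.trace_smul, smul_eq_mul]
  have hFsa : ∀ X Y, (F X * Y).trace = (X * F Y).trace := by
    intro X Y
    rw [htrF, Matrix.trace_mul_comm, htrF]
    exact Finset.sum_congr rfl fun ξ _ => by ring
  have hGsa : ∀ X Y, (G X * Y).trace = (X * G Y).trace := by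
    intro X Y
    conv_lhs => rw [← hFG Y]
    rw [← hFsa, hFG]
  -- optimal reconstruction operators
  set Q : Fin m → Matrix (Fin d) (Fin d) ℂ := fun ξ => ((p ξ : ℂ))⁻¹ • G (P ξ) with hQ
  have hQherm : ∀ ξ, (Q ξ).IsHermitian := by
    intro ξ
    show (((p ξ : ℂ))⁻¹ • G (P ξ))ᴴ = ((p ξ : ℂ))⁻¹ • G (P ξ)
    rw [Matrix.conjTranspose_smul, hGconj, (hP ξ).1.eq]
    congr 1
    simp
  have hdualQ : ∀ X, ∑ ξ, ((P ξ * X).trace) • Q ξ = X := by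
    intro X
    have hterm : ∀ ξ, ((P ξ * X).trace) • Q ξ
        = G ((((p ξ : ℂ))⁻¹ * (P ξ * X).trace) • P ξ) := by
      intro ξ
      rw [hGsmul, hQ]
      simp only [smul_smul]
      congr 1
      ring
    rw [Finset.sum_congr rfl fun ξ _ => hterm ξ, ← hGsum, ← hF, hGF]
  -- the key identity
  have key : ∀ X : Matrix (Fin d) (Fin d) ℂ, X.IsHermitian →
      ∑ ξ, (p ξ : ℂ) * ((Θ ξ * X).trace) ^ 2
        = (X * G X).trace + ∑ ξ, (p ξ : ℂ) * (((Θ ξ - Q ξ) * X).trace) ^ 2 := by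
    intro X hX
    have hq'eq : ∀ ξ, (Q ξ * X).trace = (p ξ : ℂ)⁻¹ * (P ξ * G X).trace := by
      intro ξ
      show ((((p ξ : ℂ))⁻¹ • G (P ξ)) * X).trace = _
      rw [smul_mul_assoc, Matrix.trace_smul, smul_eq_mul, hGsa]
    have hsum_tq : ∑ ξ, (P ξ * G X).trace * (Θ ξ * X).trace = (G X * X).trace := by
      conv_rhs => rw [← hdual (G X) (hGXherm X hX), Finset.sum_mul, Matrix.trace_sum]
      refine Finset.sum_congr rfl fun ξ _ => ?_
      conv_rhs => rw [smul_mul_assoc, Matrix.trace_smul, smul_eq_mul]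
    have hsum_tq' : ∑ ξ, (P ξ * G X).trace * (Q ξ * X).trace = (G X * X).trace := by
      conv_rhs => rw [← hdualQ (G X), Finset.sum_mul, Matrix.trace_sum]
      refine Finset.sum_congr rfl fun ξ _ => ?_
      conv_rhs => rw [smul_mul_assoc, Matrix.trace_smul, smul_eq_mul]
    have main : ∑ ξ, ((p ξ : ℂ) * ((Θ ξ * X).trace) ^ 2
        - (p ξ : ℂ) * (((Θ ξ - Q ξ) * X).trace) ^ 2) = (X * G X).trace := by
      have expand : ∀ ξ, (p ξ : ℂ) * ((Θ ξ * X).trace) ^ 2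
          - (p ξ : ℂ) * (((Θ ξ - Q ξ) * X).trace) ^ 2
          = 2 * ((P ξ * G X).trace * (Θ ξ * X).trace)
            - (P ξ * G X).trace * (Q ξ * X).trace := by
        intro ξ
        have h1 : (p ξ : ℂ) * (Q ξ * X).trace = (P ξ * G X).trace := by
          rw [hq'eq, ← mul_assoc, mul_inv_cancel₀ (hpne ξ), one_mul]
        rw [Matrix.sub_mul, Matrix.trace_sub]
        calc (p ξ : ℂ) * ((Θ ξ * X).trace) ^ 2
            - (p ξ : ℂ) * ((Θ ξ * X).trace - (Q ξ * X).trace) ^ 2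
            = 2 * ((Θ ξ * X).trace * ((p ξ : ℂ) * (Q ξ * X).trace))
              - (Q ξ * X).trace * ((p ξ : ℂ) * (Q ξ * X).trace) := by ring
          _ = _ := by rw [h1]; ring
      rw [Finset.sum_congr rfl fun ξ _ => expand ξ, Finset.sum_sub_distrib,
        ← Finset.mul_sum, hsum_tq, hsum_tq', Matrix.trace_mul_comm]
      ring
    rw [Finset.sum_sub_distrib] at main
    linear_combination main
  -- realness facts
  have hre_term : ∀ (A X : Matrix (Fin d) (Fin d) ℂ), A.IsHermitian → X.IsHermitian →
      ∀ c : ℝ, ((c : ℂ) * ((A * X).trace) ^ 2).re = c * (((A * X).trace).re) ^ 2 := by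
    intro A X hA hX c
    have h0 : ((A * X).trace).im = 0 := trace_herm_im A X hA hX
    have hz : (A * X).trace = ((((A * X).trace).re : ℝ) : ℂ) := Complex.ext rfl (by simp [h0])
    conv_lhs => rw [hz, ← Complex.ofReal_pow, ← Complex.ofReal_mul]
    rw [Complex.ofReal_re]
  constructor
  · -- forward
    intro hsat ξ₀
    have hzero : ∀ X : Matrix (Fin d) (Fin d) ℂ, X.IsHermitian →
        ∀ ξ, ((Θ ξ - Q ξ) * X).trace = 0 := by
      intro X hX ξ
      have hk := congrArg Complex.re (key X hX)
      rw [Complex.add_re, Complex.re_sum, Complex.re_sum] at hk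
      rw [Finset.sum_congr rfl fun ξ _ => hre_term (Θ ξ) X (hΘ ξ) hX (p ξ)] at hk
      rw [Finset.sum_congr rfl fun ξ _ =>
        hre_term (Θ ξ - Q ξ) X ((hΘ ξ).sub (hQherm ξ)) hX (p ξ)] at hk
      rw [hsat X hX] at hk
      have hzsum : ∑ ξ, p ξ * ((((Θ ξ - Q ξ) * X).trace).re) ^ 2 = 0 := by linarith
      have hnn : ∀ ξ ∈ Finset.univ, 0 ≤ p ξ * ((((Θ ξ - Q ξ) * X).trace).re) ^ 2 :=
        fun ξ _ => mul_nonneg (hppos ξ).le (sq_nonneg _)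
      have h0 := (Finset.sum_eq_zero_iff_of_nonneg hnn).mp hzsum ξ (Finset.mem_univ ξ)
      have hre0 : (((Θ ξ - Q ξ) * X).trace).re = 0 := by
        rcases mul_eq_zero.mp h0 with h | h
        · exact absurd h (hppos ξ).ne'
        · exact pow_eq_zero_iff (by norm_num) |>.mp h
      have him0 : (((Θ ξ - Q ξ) * X).trace).im = 0 :=
        trace_herm_im _ _ ((hΘ ξ).sub (hQherm ξ)) hX
      exact Complex.ext hre0 him0
    have hΔherm : (Θ ξ₀ - Q ξ₀).IsHermitian := (hΘ ξ₀).sub (hQherm ξ₀)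
    have htr0 := hzero (Θ ξ₀ - Q ξ₀) hΔherm ξ₀
    have := eq_zero_of_trace_sq _ hΔherm htr0
    have := sub_eq_zero.mp this
    rw [this, hQ]
  · -- reverse
    intro hopt X hX
    have hk := key X hX
    have hz : ∑ ξ, (p ξ : ℂ) * (((Θ ξ - Q ξ) * X).trace) ^ 2 = 0 :=
      Finset.sum_eq_zero fun ξ _ => by
        rw [hopt ξ, sub_self, Matrix.zero_mul, Matrix.trace_zero]
        ring
    rw [hz, add_zero] at hk
    have hk' := congrArg Complex.re hk
    rw [Complex.re_sum] at hk'
    rw [Finset.sum_congr rfl fun ξ _ => hre_term (Θ ξ) X (hΘ ξ) hX (p ξ)] at hk'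
    exact hk'
end

section
/- Let d, m ≥ 1, let Π : Fin m → (d×d complex matrices) be Hermitian positive semidefinite with ∑_ξ Π_ξ = I, let ρ be Hermitian positive definite with tr ρ = 1, set p_ξ := tr(Π_ξ ρ) and assume p_ξ > 0 for every ξ. Let F be the ℝ-linear map on d×d Hermitian matrices given by F(X) = ∑_ξ p_ξ⁻¹ tr(Π_ξ X) Π_ξ, and assume F is bijective. Then tr(F⁻¹(Π_ξ)) = p_ξ for every ξ; equivalently, each optimal reconstruction operator Θ_ξ = p_ξ⁻¹ F⁻¹(Π_ξ) has unit trace. -/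
open Matrix ComplexOrder
open scoped BigOperators

/-- Property (17b): the optimal reconstruction operators have unit trace, i.e.
`tr(F⁻¹(P ξ)) = p ξ` for every `ξ`, where `G = F⁻¹` is the inverse of the
(bijective) frame superoperator. -/
theorem stmt_4 (d m : ℕ) (hd : 1 ≤ d) (hm : 1 ≤ m)
    (P : Fin m → Matrix (Fin d) (Fin d) ℂ)
    (hP : ∀ ξ, (P ξ).PosSemidef) (hPsum : ∑ ξ, P ξ = 1)
    (ρ : Matrix (Fin d) (Fin d) ℂ) (hρ : ρ.PosDef) (hρtr : ρ.trace = 1)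
    (p : Fin m → ℝ) (hp : ∀ ξ, (p ξ : ℂ) = (P ξ * ρ).trace) (hppos : ∀ ξ, 0 < p ξ)
    (F G : Matrix (Fin d) (Fin d) ℂ → Matrix (Fin d) (Fin d) ℂ)
    (hF : ∀ X, F X = ∑ ξ, (((p ξ : ℂ))⁻¹ * (P ξ * X).trace) • P ξ)
    (hGF : ∀ X, G (F X) = X) (hFG : ∀ X, F (G X) = X) :
    ∀ ξ, (G (P ξ)).trace = (p ξ : ℂ) := by
  have hFρ : F ρ = 1 := by
    rw [hF]
    have : ∀ ξ : Fin m, (((p ξ : ℂ))⁻¹ * (P ξ * ρ).trace) • P ξ = P ξ := by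
      intro ξ
      rw [← hp ξ, inv_mul_cancel₀ (by exact_mod_cast (hppos ξ).ne'), one_smul]
    simp only [this, hPsum]
  have key : ∀ X Y : Matrix (Fin d) (Fin d) ℂ, (F X * Y).trace = (X * F Y).trace := by
    intro X Y
    rw [hF, hF, Finset.sum_mul, Finset.mul_sum, trace_sum, trace_sum]
    refine Finset.sum_congr rfl fun ξ _ => ?_
    rw [smul_mul_assoc, mul_smul_comm, trace_smul, trace_smul, smul_eq_mul, smul_eq_mul,
      Matrix.trace_mul_comm (P ξ) X, Matrix.trace_mul_comm (P ξ) Y]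
    ring
  intro ξ
  calc (G (P ξ)).trace = (F ρ * G (P ξ)).trace := by rw [hFρ, one_mul]
    _ = (ρ * F (G (P ξ))).trace := key ρ (G (P ξ))
    _ = (ρ * P ξ).trace := by rw [hFG]
    _ = (p ξ : ℂ) := by rw [Matrix.trace_mul_comm, ← hp]
end

section
/- Let d ≥ 1 and let ψ : Fin d² → ℂᵈ be unit vectors satisfying |⟨ψ_ξ, ψ_ζ⟩|² = (d·δ_{ξζ} + 1)/(d + 1) for all ξ, ζ. Then for every d×d Hermitian complex matrix A, ∑_ξ (⟨ψ_ξ, A ψ_ξ⟩)² = d·(tr(A²) + (tr A)²)/(d + 1), where each ⟨ψ_ξ, A ψ_ξ⟩ is a real number. -/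
/-!
Vectorise the projectors `Π_ξ = ψ_ξ ψ_ξ*` and let `F = ∑ ξ, |Π_ξ⟩⟨Π_ξ|` be their frame operator on
`ℂ^(d × d)`. The SIC overlaps give `tr (F F) = tr (F D) = 2d³/(d+1) = tr (D D)`, where `D` is the
frame operator `X ↦ d/(d+1) (X + tr X • 1)` of a 2-design; for Hermitian `F` and `D` this forces
`tr ((F - D)²) = 0`, hence `F = D`. Reading off the bilinear form of `F` at `Aᵀ` and `B` then gives
`∑ ξ, ⟨ψ_ξ, A ψ_ξ⟩ ⟨ψ_ξ, B ψ_ξ⟩ = d/(d+1) (tr (A B) + tr A tr B)`.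
-/

open Matrix
open scoped BigOperators

namespace Matrix

theorem isHermitian_vecMulVec_star {m α : Type*} [Mul α] [StarMul α] (v : m → α) :
    (vecMulVec v (star v)).IsHermitian := by
  rw [IsHermitian, conjTranspose_vecMulVec, star_star]

variable {m : Type*} [Fintype m]

theorem trace_vecMulVec_mul_vecMulVec {R : Type*} [CommSemiring R] (u v w x : m → R) :
    (vecMulVec u v * vecMulVec w x).trace = (v ⬝ᵥ w) * (u ⬝ᵥ x) := by
  rw [vecMulVec_mul_vecMulVec, trace_vecMulVec, dotProduct_smul, smul_eq_mul]

theorem trace_mul_vecMulVec {R : Type*} [CommSemiring R] (A : Matrix m m R) (x y : m → R) :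
    (A * vecMulVec x y).trace = y ⬝ᵥ (A *ᵥ x) := by
  rw [mul_vecMulVec, trace_vecMulVec, dotProduct_comm]

/-- The hypotheses say exactly that `tr ((A - B)ᴴ (A - B)) = 0`. -/
theorem IsHermitian.eq_of_trace_mul_eq {R : Type*} [CommRing R] [PartialOrder R] [StarRing R]
    [StarOrderedRing R] [NoZeroDivisors R] {A B : Matrix m m R} (hA : A.IsHermitian)
    (hB : B.IsHermitian) (hAA : (A * A).trace = (A * B).trace)
    (hBB : (B * B).trace = (A * B).trace) : A = B := by
  rw [← sub_eq_zero, ← trace_conjTranspose_mul_self_eq_zero_iff, (hA.sub hB).eq, sub_mul,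
    mul_sub, mul_sub, trace_sub, trace_sub, trace_sub, trace_mul_comm B A, hAA, hBB, sub_self]

end Matrix

section FrameOperator

variable {n ι : Type*} [Fintype ι]

def projVec (v : n → ℂ) : n × n → ℂ := vec (vecMulVec v (star v))

/-- The frame operator `X ↦ ∑ ξ, tr (Π_ξ X) Π_ξ` of the projectors `Π_ξ = ψ_ξ ψ_ξ*`, acting on
vectorised matrices. -/
def frameOperator (ψ : ι → n → ℂ) : Matrix (n × n) (n × n) ℂ :=
  ∑ ξ, vecMulVec (projVec (ψ ξ)) (star (projVec (ψ ξ)))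

theorem isHermitian_frameOperator (ψ : ι → n → ℂ) : (frameOperator ψ).IsHermitian := by
  simp only [IsHermitian, frameOperator, conjTranspose_sum, (isHermitian_vecMulVec_star _).eq]

variable [Fintype n]

theorem star_projVec_dotProduct_projVec (v w : n → ℂ) :
    star (projVec v) ⬝ᵥ projVec w = ((‖star v ⬝ᵥ w‖ ^ 2 : ℝ) : ℂ) := by
  rw [projVec, projVec, star_vec_dotProduct_vec, (isHermitian_vecMulVec_star v).eq,
    trace_vecMulVec_mul_vecMulVec, dotProduct_comm v, star_dotProduct (v := w) (w := v),
    Complex.ofReal_pow]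
  exact Complex.mul_conj' _

theorem vec_dotProduct_projVec (A : Matrix n n ℂ) (v : n → ℂ) :
    vec A ⬝ᵥ projVec v = star v ⬝ᵥ (Aᵀ *ᵥ v) := by
  rw [projVec, vec_dotProduct_vec, trace_mul_vecMulVec]

theorem star_projVec_dotProduct_vec (v : n → ℂ) (A : Matrix n n ℂ) :
    star (projVec v) ⬝ᵥ vec A = star v ⬝ᵥ (A *ᵥ v) := by
  rw [projVec, star_vec_dotProduct_vec, (isHermitian_vecMulVec_star v).eq,
    trace_mul_comm, trace_mul_vecMulVec]

theorem dotProduct_frameOperator_mulVec (ψ : ι → n → ℂ) (x y : n × n → ℂ) :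
    x ⬝ᵥ (frameOperator ψ *ᵥ y) = ∑ ξ, (x ⬝ᵥ projVec (ψ ξ)) * (star (projVec (ψ ξ)) ⬝ᵥ y) := by
  simp only [frameOperator, sum_mulVec, dotProduct_sum, vecMulVec_mulVec, op_smul_eq_smul,
    dotProduct_smul, smul_eq_mul, mul_comm]

end FrameOperator

section Design

variable (n : Type*) [Fintype n] [DecidableEq n]

/-- The frame operator `X ↦ d/(d+1) • (X + tr X • 1)` of a complex projective 2-design in
dimension `d`, acting on vectorised matrices. -/
noncomputable def designFrameOperator : Matrix (n × n) (n × n) ℂ :=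
  ((Fintype.card n : ℂ) / (Fintype.card n + 1)) • (vecMulVec (vec 1) (vec 1) + 1)

theorem vec_one_dotProduct_vec_one : vec (1 : Matrix n n ℂ) ⬝ᵥ vec 1 = Fintype.card n := by
  rw [vec_dotProduct_vec, transpose_one, Matrix.one_mul, trace_one]

theorem isHermitian_designFrameOperator : (designFrameOperator n).IsHermitian := by
  have hvec : star (vec (1 : Matrix n n ℂ)) = vec 1 := by
    rw [star_vec, Matrix.map_one _ (star_zero _) (star_one _)]
  have hE := isHermitian_vecMulVec_star (vec (1 : Matrix n n ℂ))
  rw [hvec] at hE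
  refine (hE.add isHermitian_one).smul ?_
  exact ((IsSelfAdjoint.natCast _).div ((IsSelfAdjoint.natCast _).add (IsSelfAdjoint.one _)))

theorem trace_designFrameOperator_mul_self :
    (designFrameOperator n * designFrameOperator n).trace =
      2 * (Fintype.card n : ℂ) ^ 3 / (Fintype.card n + 1) := by
  simp only [designFrameOperator, smul_mul_smul_comm, add_mul, mul_add, Matrix.mul_one,
    Matrix.one_mul, trace_smul, trace_add, trace_vecMulVec_mul_vecMulVec, trace_vecMulVec,
    trace_one, vec_one_dotProduct_vec_one, Fintype.card_prod, smul_eq_mul]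
  field_simp
  push_cast
  ring

end Design

section SIC

variable {n ι : Type*} [Fintype n] [Fintype ι] [DecidableEq ι]

structure IsSIC (ψ : ι → n → ℂ) : Prop where
  card_eq : Fintype.card ι = Fintype.card n ^ 2
  star_dotProduct_self : ∀ ξ, star (ψ ξ) ⬝ᵥ ψ ξ = 1
  norm_star_dotProduct_sq : ∀ ξ ζ, ‖star (ψ ξ) ⬝ᵥ ψ ζ‖ ^ 2 =
    ((Fintype.card n : ℝ) * (if ξ = ζ then 1 else 0) + 1) / (Fintype.card n + 1)

namespace IsSIC

variable {ψ : ι → n → ℂ} (h : IsSIC ψ)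
include h

theorem star_projVec_dotProduct_projVec (ξ ζ : ι) :
    star (projVec (ψ ξ)) ⬝ᵥ projVec (ψ ζ) =
      ((Fintype.card n : ℂ) * (if ξ = ζ then 1 else 0) + 1) / (Fintype.card n + 1) := by
  rw [_root_.star_projVec_dotProduct_projVec, h.norm_star_dotProduct_sq]
  split_ifs <;> simp

theorem trace_frameOperator_mul_self :
    (frameOperator ψ * frameOperator ψ).trace =
      2 * (Fintype.card n : ℂ) ^ 3 / (Fintype.card n + 1) := by
  have hterm : ∀ ξ ζ : ι, star (projVec (ψ ξ)) ⬝ᵥ projVec (ψ ζ) *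
      (star (projVec (ψ ζ)) ⬝ᵥ projVec (ψ ξ)) =
      ((Fintype.card n ^ 2 + 2 * Fintype.card n) * (if ξ = ζ then 1 else 0) + 1) /
        ((Fintype.card n : ℂ) + 1) ^ 2 := by
    intro ξ ζ
    rw [h.star_projVec_dotProduct_projVec, h.star_projVec_dotProduct_projVec]
    by_cases hξζ : ξ = ζ
    · simp only [hξζ, if_true]
      field_simp
      ring
    · simp only [hξζ, Ne.symm hξζ, if_false]
      field_simp
      ring
  simp only [frameOperator, Finset.sum_mul_sum, trace_sum, trace_vecMulVec_mul_vecMulVec,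
    dotProduct_comm (projVec _) (star _), hterm, ← Finset.sum_div, Finset.sum_add_distrib,
    mul_ite, mul_one, mul_zero, Finset.sum_ite_eq, Finset.mem_univ, if_true, Finset.sum_const,
    Finset.card_univ, h.card_eq, nsmul_eq_mul]
  field_simp
  push_cast
  ring

variable [DecidableEq n]

theorem trace_frameOperator_mul_designFrameOperator :
    (frameOperator ψ * designFrameOperator n).trace =
      2 * (Fintype.card n : ℂ) ^ 3 / (Fintype.card n + 1) := by
  have hstar_one : ∀ ξ, star (projVec (ψ ξ)) ⬝ᵥ vec 1 = 1 := fun ξ => by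
    rw [star_projVec_dotProduct_vec, one_mulVec, h.star_dotProduct_self]
  have hone : ∀ ξ, projVec (ψ ξ) ⬝ᵥ vec 1 = 1 := fun ξ => by
    rw [dotProduct_comm, vec_dotProduct_projVec, transpose_one, one_mulVec,
      h.star_dotProduct_self]
  have hself : ∀ ξ, projVec (ψ ξ) ⬝ᵥ star (projVec (ψ ξ)) = 1 := fun ξ => by
    rw [dotProduct_comm, h.star_projVec_dotProduct_projVec, if_pos rfl, mul_one, div_self (Nat.cast_add_one_ne_zero _)]
  simp only [frameOperator, designFrameOperator, Matrix.mul_smul, trace_smul, Finset.sum_mul,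
    trace_sum, Matrix.mul_add, Matrix.mul_one, trace_add, trace_vecMulVec_mul_vecMulVec,
    trace_vecMulVec, hstar_one, hone, hself, Finset.sum_const, Finset.card_univ, h.card_eq,
    nsmul_eq_mul, smul_eq_mul]
  field_simp
  push_cast
  ring

open scoped ComplexOrder in
theorem frameOperator_eq : frameOperator ψ = designFrameOperator n :=
  (isHermitian_frameOperator ψ).eq_of_trace_mul_eq (isHermitian_designFrameOperator n)
    (h.trace_frameOperator_mul_self.trans h.trace_frameOperator_mul_designFrameOperator.symm)
    ((trace_designFrameOperator_mul_self n).trans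
      h.trace_frameOperator_mul_designFrameOperator.symm)

theorem sum_star_dotProduct_mulVec_mul (A B : Matrix n n ℂ) :
    ∑ ξ, (star (ψ ξ) ⬝ᵥ (A *ᵥ ψ ξ)) * (star (ψ ξ) ⬝ᵥ (B *ᵥ ψ ξ)) =
      Fintype.card n * ((A * B).trace + A.trace * B.trace) / (Fintype.card n + 1) := by
  calc ∑ ξ, (star (ψ ξ) ⬝ᵥ (A *ᵥ ψ ξ)) * (star (ψ ξ) ⬝ᵥ (B *ᵥ ψ ξ))
      = vec Aᵀ ⬝ᵥ (frameOperator ψ *ᵥ vec B) := by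
        simp only [dotProduct_frameOperator_mulVec, vec_dotProduct_projVec, transpose_transpose,
          star_projVec_dotProduct_vec]
    _ = vec Aᵀ ⬝ᵥ (designFrameOperator n *ᵥ vec B) := by rw [h.frameOperator_eq]
    _ = _ := by
        simp only [designFrameOperator, smul_mulVec, add_mulVec, vecMulVec_mulVec, one_mulVec,
          op_smul_eq_smul, dotProduct_add, dotProduct_smul, smul_eq_mul, vec_dotProduct_vec,
          transpose_transpose, transpose_one, Matrix.mul_one, Matrix.one_mul]
        ring

end IsSIC

end SIC

theorem stmt_6_general (d : ℕ) (ψ : Fin (d ^ 2) → Fin d → ℂ)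
    (hunit : ∀ ξ, star (ψ ξ) ⬝ᵥ ψ ξ = 1)
    (hsic : ∀ ξ ζ, ‖star (ψ ξ) ⬝ᵥ ψ ζ‖ ^ 2 =
      ((d : ℝ) * (if ξ = ζ then 1 else 0) + 1) / (d + 1)) :
    ∀ A : Matrix (Fin d) (Fin d) ℂ, A.IsHermitian →
      (∀ ξ, (star (ψ ξ) ⬝ᵥ (A *ᵥ ψ ξ)).im = 0) ∧
      ∑ ξ, (star (ψ ξ) ⬝ᵥ (A *ᵥ ψ ξ)) ^ 2 =
        (d : ℂ) * ((A * A).trace + A.trace ^ 2) / (d + 1) := by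
  have hψ : IsSIC ψ := ⟨by simp, hunit, by simpa using hsic⟩
  intro A hA
  refine ⟨fun ξ => hA.im_star_dotProduct_mulVec_self (ψ ξ), ?_⟩
  simpa [sq] using hψ.sum_star_dotProduct_mulVec_mul A A

/-- SIC 2-design identity: if `ψ` is a family of `d²` unit vectors with
`|⟨ψ ξ, ψ ζ⟩|² = (d δ_{ξζ} + 1)/(d+1)`, then for every Hermitian `A`,
`∑ ξ, ⟨ψ ξ, A ψ ξ⟩² = d (tr(A²) + (tr A)²)/(d+1)`, each `⟨ψ ξ, A ψ ξ⟩`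
being real. -/
theorem stmt_6 (d : ℕ) (hd : 1 ≤ d) (ψ : Fin (d ^ 2) → Fin d → ℂ)
    (hunit : ∀ ξ, star (ψ ξ) ⬝ᵥ ψ ξ = 1)
    (hsic : ∀ ξ ζ, ‖star (ψ ξ) ⬝ᵥ ψ ζ‖ ^ 2 =
      ((d : ℝ) * (if ξ = ζ then 1 else 0) + 1) / (d + 1)) :
    ∀ A : Matrix (Fin d) (Fin d) ℂ, A.IsHermitian →
      (∀ ξ, (star (ψ ξ) ⬝ᵥ (A *ᵥ ψ ξ)).im = 0) ∧
      ∑ ξ, (star (ψ ξ) ⬝ᵥ (A *ᵥ ψ ξ)) ^ 2 =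
        (d : ℂ) * ((A * A).trace + A.trace ^ 2) / (d + 1) :=
  stmt_6_general d ψ hunit hsic
end

section
/- Let d ≥ 1 and let e : Fin (d+1) → Fin d → ℂᵈ be such that for each b, (e_{b,j})_j is an orthonormal basis of ℂᵈ, and for all b ≠ b' and all j, j' one has |⟨e_{b,j}, e_{b',j'}⟩|² = 1/d. Then for every d×d Hermitian complex matrix A, ∑_{b=0}^{d} ∑_{j=0}^{d-1} (⟨e_{b,j}, A e_{b,j}⟩)² = tr(A²) + (tr A)², where each ⟨e_{b,j}, A e_{b,j}⟩ is a real number. -/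
/-!
Let `K = ∑ᵢ Pᵢ ⊗ Pᵢ`, with `Pᵢ = |uᵢ⟩⟨uᵢ|` running over the `d(d+1)` vectors of the bases,
and let `S` be the swap operator on `ℂᵈ ⊗ ℂᵈ`. Since `tr((P ⊗ P) S) = tr(P²) = 1` and
`tr((P ⊗ P)(Q ⊗ Q)) = |⟨u, v⟩|⁴`, mutual unbiasedness gives
`tr(K²) = tr(K (1 + S)) = tr((1 + S)²) = 2d(d+1)`. Hence the Hermitian matrix `K - (1 + S)` has
vanishing Frobenius norm, so `K = 1 + S`, and pairing with `A ⊗ A` gives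
`∑ᵢ ⟨uᵢ, A uᵢ⟩² = tr(K (A ⊗ A)) = (tr A)² + tr(A²)`.
-/

open Matrix
open scoped Kronecker

namespace Matrix

variable {n R : Type*} [Fintype n]

def swapMatrix (n R : Type*) [DecidableEq n] [Zero R] [One R] : Matrix (n × n) (n × n) R :=
  of fun p q => if p = q.swap then 1 else 0

theorem trace_kronecker_mul_swapMatrix [DecidableEq n] [NonAssocSemiring R] (B C : Matrix n n R) :
    ((B ⊗ₖ C) * swapMatrix n R).trace = (B * C).trace := by
  simp [trace, mul_apply, swapMatrix, Fintype.sum_prod_type, Prod.ext_iff, ite_and]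

theorem swapMatrix_mul_swapMatrix [DecidableEq n] [NonAssocSemiring R] :
    swapMatrix n R * swapMatrix n R = 1 := by
  ext p q
  simp [mul_apply, swapMatrix, one_apply, Fintype.sum_prod_type, Prod.ext_iff, eq_comm, ite_and]

theorem trace_swapMatrix [DecidableEq n] [NonAssocSemiring R] :
    (swapMatrix n R).trace = Fintype.card n := by
  simp [trace, swapMatrix, Fintype.sum_prod_type, Prod.ext_iff, ite_and]

omit [Fintype n] in
theorem isHermitian_swapMatrix [DecidableEq n] [NonAssocSemiring R] [StarRing R] :
    (swapMatrix n R).IsHermitian := by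
  ext p q
  simp [swapMatrix, Prod.ext_iff, and_comm, eq_comm, apply_ite star]

theorem IsHermitian.eq_of_trace_mul_eq_s7 [PartialOrder R] [CommRing R] [StarRing R]
    [StarOrderedRing R] [NoZeroDivisors R] {X Y : Matrix n n R} (hX : X.IsHermitian)
    (hY : Y.IsHermitian) (hXX : (X * X).trace = (X * Y).trace)
    (hYY : (Y * Y).trace = (X * Y).trace) : X = Y := by
  rw [← sub_eq_zero, ← trace_conjTranspose_mul_self_eq_zero_iff, (hX.sub hY).eq, sub_mul,
    mul_sub, mul_sub, trace_sub, trace_sub, trace_sub, trace_mul_comm Y X, hXX, hYY]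
  abel

section SecondMoment

open scoped ComplexOrder

variable {ι 𝕜 : Type*} [Fintype ι] [RCLike 𝕜]

theorem trace_vecMulVec_star_mul (u : n → 𝕜) (A : Matrix n n 𝕜) :
    (vecMulVec u (star u) * A).trace = star u ⬝ᵥ (A *ᵥ u) := by
  rw [vecMulVec_mul, trace_vecMulVec, dotProduct_mulVec, dotProduct_comm]

theorem trace_vecMulVec_star_mul_vecMulVec_star (u v : n → 𝕜) :
    (vecMulVec u (star u) * vecMulVec v (star v)).trace = (‖star u ⬝ᵥ v‖ ^ 2 : 𝕜) := by
  rw [vecMulVec_mul_vecMulVec, trace_vecMulVec, dotProduct_smul, smul_eq_mul,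
    ← RCLike.mul_conj, ← RCLike.star_def, star_dotProduct, star_star, dotProduct_comm]

def secondMoment (u : ι → n → 𝕜) : Matrix (n × n) (n × n) 𝕜 :=
  ∑ i, vecMulVec (u i) (star (u i)) ⊗ₖ vecMulVec (u i) (star (u i))

omit [Fintype n] in
theorem isHermitian_secondMoment (u : ι → n → 𝕜) : (secondMoment u).IsHermitian := by
  simp only [IsHermitian, secondMoment, conjTranspose_sum, conjTranspose_kronecker,
    conjTranspose_vecMulVec, star_star]

theorem trace_secondMoment_mul_kronecker (u : ι → n → 𝕜) (A B : Matrix n n 𝕜) :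
    (secondMoment u * (A ⊗ₖ B)).trace =
      ∑ i, (star (u i) ⬝ᵥ (A *ᵥ u i)) * (star (u i) ⬝ᵥ (B *ᵥ u i)) := by
  simp only [secondMoment, Finset.sum_mul, trace_sum, ← mul_kronecker_mul, trace_kronecker,
    trace_vecMulVec_star_mul]

theorem trace_secondMoment_mul_swapMatrix [DecidableEq n] (u : ι → n → 𝕜) :
    (secondMoment u * swapMatrix n 𝕜).trace = ∑ i, (‖star (u i) ⬝ᵥ u i‖ ^ 2 : 𝕜) := by
  simp only [secondMoment, Finset.sum_mul, trace_sum, trace_kronecker_mul_swapMatrix,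
    trace_vecMulVec_star_mul_vecMulVec_star]

theorem trace_secondMoment_mul_self (u : ι → n → 𝕜) :
    (secondMoment u * secondMoment u).trace =
      ((∑ i, ∑ k, ‖star (u i) ⬝ᵥ u k‖ ^ 4 : ℝ) : 𝕜) := by
  push_cast
  simp only [secondMoment, Finset.sum_mul, Finset.mul_sum, trace_sum, ← mul_kronecker_mul,
    trace_kronecker, trace_vecMulVec_star_mul_vecMulVec_star]
  rw [Finset.sum_comm]
  ring_nf

/-- Equality case of the Welch bound `∑ᵢ∑ₖ |⟨uᵢ, uₖ⟩|⁴ ≥ 2 |ι|² / (d (d + 1))`. -/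
theorem secondMoment_eq_one_add_swapMatrix [DecidableEq n] {u : ι → n → 𝕜}
    (hunit : ∀ i, star (u i) ⬝ᵥ u i = 1)
    (hcard : Fintype.card ι = Fintype.card n * (Fintype.card n + 1))
    (hpot : ∑ i, ∑ k, ‖star (u i) ⬝ᵥ u k‖ ^ 4 = 2 * Fintype.card ι) :
    secondMoment u = 1 + swapMatrix n 𝕜 := by
  have hmixed : (secondMoment u * (1 + swapMatrix n 𝕜)).trace = 2 * Fintype.card ι := by
    rw [mul_add, trace_add, ← one_kronecker_one, trace_secondMoment_mul_kronecker,
      trace_secondMoment_mul_swapMatrix]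
    simp [hunit, two_mul]
  refine (isHermitian_secondMoment u).eq_of_trace_mul_eq_s7
    (isHermitian_one.add isHermitian_swapMatrix) ?_ ?_
  · rw [trace_secondMoment_mul_self, hpot, hmixed]
    norm_cast
  · rw [hmixed, add_mul, mul_add, mul_add, swapMatrix_mul_swapMatrix]
    simp only [mul_one, one_mul, trace_add, trace_one, trace_swapMatrix, Fintype.card_prod, hcard]
    push_cast
    ring

end SecondMoment

section MutuallyUnbiased

variable {d : ℕ} {e : Fin (d + 1) → Fin d → Fin d → ℂ}

theorem sum_norm_star_dotProduct_pow_four_of_mub (hd : d ≠ 0)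
    (hortho : ∀ b j k, star (e b j) ⬝ᵥ e b k = if j = k then 1 else 0)
    (hmub : ∀ b b', b ≠ b' → ∀ j j', ‖star (e b j) ⬝ᵥ e b' j'‖ ^ 2 = 1 / d) (b j) :
    ∑ b', ∑ j', ‖star (e b j) ⬝ᵥ e b' j'‖ ^ 4 = 2 := by
  have hsame : ∑ j', ‖star (e b j) ⬝ᵥ e b j'‖ ^ 4 = 1 := by
    simp [hortho, apply_ite]
  have hother : ∀ b' ∈ ({b}ᶜ : Finset _), ∑ j', ‖star (e b j) ⬝ᵥ e b' j'‖ ^ 4 = 1 / d := by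
    intro b' hb'
    have hbb' : b ≠ b' := fun h => by simp [h] at hb'
    simp only [show 4 = 2 * 2 from rfl, pow_mul, hmub b b' hbb']
    rw [Finset.sum_const, Finset.card_univ, Fintype.card_fin, nsmul_eq_mul]
    field_simp
  rw [Fintype.sum_eq_add_sum_compl b, hsame, Finset.sum_congr rfl hother, Finset.sum_const,
    Finset.card_compl, Finset.card_singleton, Fintype.card_fin, Nat.add_sub_cancel, nsmul_eq_mul]
  field_simp
  ring

end MutuallyUnbiased

end Matrix

/-- MUB 2-design identity: if `e` gives `d+1` pairwise mutually unbiased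
orthonormal bases of `ℂᵈ`, then for every Hermitian `A`,
`∑_{b,j} ⟨e b j, A (e b j)⟩² = tr(A²) + (tr A)²`, each `⟨e b j, A (e b j)⟩`
being real. -/
theorem stmt_7 (d : ℕ) (hd : 1 ≤ d) (e : Fin (d + 1) → Fin d → Fin d → ℂ)
    (hortho : ∀ b j k, star (e b j) ⬝ᵥ e b k = if j = k then 1 else 0)
    (hmub : ∀ b b', b ≠ b' → ∀ j j', ‖star (e b j) ⬝ᵥ e b' j'‖ ^ 2 = 1 / d) :
    ∀ A : Matrix (Fin d) (Fin d) ℂ, A.IsHermitian →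
      (∀ b j, (star (e b j) ⬝ᵥ (A *ᵥ e b j)).im = 0) ∧
      ∑ b : Fin (d + 1), ∑ j : Fin d, (star (e b j) ⬝ᵥ (A *ᵥ e b j)) ^ 2 =
        (A * A).trace + A.trace ^ 2 := by
  intro A hA
  refine ⟨fun b j => hA.im_star_dotProduct_mulVec_self (e b j), ?_⟩
  let u : Fin (d + 1) × Fin d → Fin d → ℂ := fun p => e p.1 p.2
  have hK : secondMoment u = 1 + swapMatrix (Fin d) ℂ := by
    refine secondMoment_eq_one_add_swapMatrix (fun p => by simpa using hortho p.1 p.2 p.2)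
      (by simp [mul_comm]) ?_
    simp only [Fintype.sum_prod_type, u,
      sum_norm_star_dotProduct_pow_four_of_mub (by omega) hortho hmub]
    simp only [Finset.sum_const, Finset.card_univ, Fintype.card_fin, Fintype.card_prod,
      nsmul_eq_mul, Nat.cast_mul, Nat.cast_add, Nat.cast_one]
    ring
  calc _ = (secondMoment u * (A ⊗ₖ A)).trace := by
        simp [trace_secondMoment_mul_kronecker, Fintype.sum_prod_type, u, sq]
    _ = (A * A).trace + A.trace ^ 2 := by
        rw [hK, add_mul, one_mul, trace_add, trace_kronecker, trace_mul_comm,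
          trace_kronecker_mul_swapMatrix]
        ring
end

section
/- Let d ≥ 1, let e : Fin (d+1) → Fin d → ℂᵈ give d+1 orthonormal bases of ℂᵈ that are pairwise mutually unbiased (|⟨e_{b,j}, e_{b',j'}⟩|² = 1/d whenever b ≠ b'), and let ρ be a d×d Hermitian positive definite matrix with tr ρ = 1. Define Π_{b,j} := |e_{b,j}⟩⟨e_{b,j}|/(d+1) and p_{b,j} := tr(Π_{b,j} ρ) > 0, and let F be the ℝ-linear map on the real vector space of d×d Hermitian matrices given by F(X) = ∑_{b,j} p_{b,j}⁻¹ tr(Π_{b,j} X) Π_{b,j}. Then F is bijective, and the trace of the ℝ-linear endomorphism F⁻¹ equals d² + d − d·tr(ρ²). Consequently the scaled mean-square error of the best linear unbiased estimator, Tr(F⁻¹) − tr(ρ²), equals (d+1)(d − tr(ρ²)). -/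
open Matrix ComplexOrder
open scoped BigOperators

/-!
The projectors `A b j = |e b j⟩⟨e b j|` of a complete set of mutually unbiased bases form a
2-design: `∑ tr(A b j X) • A b j = X + tr X • 1`. Indeed, by the Gram matrix of the `A b j`,
`R = ∑ tr(A b j ·) • A b j - tr(·) • 1` fixes every `A b j` and maps into their span; its trace
is `d²`, so that span is everything and `R = id`. Consequently
`X = ∑ tr(A b j X) • (A b j - (d+1)⁻¹ • 1)`, and it suffices to invert `F` on the
`A b j - (d+1)⁻¹ • 1`. Since `F ρ = 1` and `F` is diagonal on traceless combinations of the
projectors of a single basis, these have explicit preimages `W b j`, which give `F⁻¹` explicitly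
with `Tr F⁻¹ = ∑ tr(A b j W b j)`. Writing `q b j = tr(A b j ρ)`, this sum only involves
`∑ j, q b j = 1` and `∑ q b j ^ 2 = tr ρ² + 1` (the 2-design identity at `ρ`).
-/

theorem Matrix.sum_vecMulVec_self_star_eq_one {n R : Type*} [Fintype n] [DecidableEq n]
    [CommRing R] [StarRing R] (v : n → n → R)
    (hv : ∀ j k, star (v j) ⬝ᵥ v k = if j = k then 1 else 0) :
    ∑ j, vecMulVec (v j) (star (v j)) = 1 := by
  set M : Matrix n n R := Matrix.of fun j => star (v j)
  have hM : M * Mᴴ = 1 := by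
    ext j k
    simpa [M, mul_apply, one_apply, dotProduct] using hv j k
  ext i i'
  rw [← mul_eq_one_comm.mp hM]
  simp [M, mul_apply, sum_apply, vecMulVec_apply]

theorem LinearMap.eq_id_of_trace_eq_finrank {K V : Type*} [Field K] [CharZero K]
    [AddCommGroup V] [Module K V] [FiniteDimensional K V] {s : Set V} {f : V →ₗ[K] V}
    (hrange : ∀ x, f x ∈ Submodule.span K s) (hfix : ∀ v ∈ s, f v = v)
    (htrace : LinearMap.trace K V f = Module.finrank K V) : f = LinearMap.id := by
  have hfix' : Submodule.span K s ≤ LinearMap.eqLocus f LinearMap.id :=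
    Submodule.span_le.mpr hfix
  have hproj : LinearMap.IsProj (Submodule.span K s) f := ⟨hrange, fun x hx => hfix' hx⟩
  have htop : Submodule.span K s = ⊤ := by
    refine Submodule.eq_top_of_finrank_eq (Nat.cast_injective (R := K) ?_)
    rw [← hproj.trace, htrace]
  ext1 x
  exact hfix' (htop ▸ Submodule.mem_top)

namespace MUB

def proj {n : Type*} (v : n → ℂ) : Matrix n n ℂ := vecMulVec v (star v)

def traceMul {n R : Type*} [Fintype n] [DecidableEq n] [CommSemiring R] (B : Matrix n n R) :
    Matrix n n R →ₗ[R] R :=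
  traceLinearMap n R R ∘ₗ LinearMap.mulLeft R B

@[simp]
theorem traceMul_apply {n R : Type*} [Fintype n] [DecidableEq n] [CommSemiring R]
    (B X : Matrix n n R) : traceMul B X = (B * X).trace := rfl

variable {d : ℕ}

structure IsCompleteMUB (e : Fin (d + 1) → Fin d → Fin d → ℂ) : Prop where
  orthonormal : ∀ b j k, star (e b j) ⬝ᵥ e b k = if j = k then 1 else 0
  unbiased : ∀ b b', b ≠ b' → ∀ j j', ‖star (e b j) ⬝ᵥ e b' j'‖ ^ 2 = 1 / d

namespace IsCompleteMUB

variable {e : Fin (d + 1) → Fin d → Fin d → ℂ}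

theorem sum_proj (he : IsCompleteMUB e) (b : Fin (d + 1)) : ∑ j, proj (e b j) = 1 :=
  sum_vecMulVec_self_star_eq_one (e b) (he.orthonormal b)

theorem trace_proj (he : IsCompleteMUB e) (b : Fin (d + 1)) (j : Fin d) :
    (proj (e b j)).trace = 1 := by
  rw [proj, trace_vecMulVec, dotProduct_comm, he.orthonormal, if_pos rfl]

theorem trace_proj_mul_proj (he : IsCompleteMUB e) (b b' : Fin (d + 1)) (j j' : Fin d) :
    (proj (e b j) * proj (e b' j')).trace =
      if b = b' then (if j = j' then 1 else 0) else (d : ℂ)⁻¹ := by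
  have hnorm : (proj (e b j) * proj (e b' j')).trace = ‖star (e b j) ⬝ᵥ e b' j'‖ ^ 2 := by
    rw [proj, proj, vecMulVec_mul_vecMulVec, trace_vecMulVec, dotProduct_smul, smul_eq_mul,
      dotProduct_star, dotProduct_comm (e b' j')]
    exact Complex.mul_conj' _
  rw [hnorm]
  split_ifs with hb hj
  · subst hb hj; simp [he.orthonormal]
  · subst hb; simp [he.orthonormal, hj]
  · rw [← Complex.ofReal_pow, he.unbiased b b' hb]; simp

theorem sum_trace_proj_mul (he : IsCompleteMUB e) (b : Fin (d + 1))
    (X : Matrix (Fin d) (Fin d) ℂ) : ∑ j, (proj (e b j) * X).trace = X.trace := by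
  rw [← trace_sum, ← Finset.sum_mul, he.sum_proj, one_mul]

theorem sum_trace_proj_mul_proj_smul (he : IsCompleteMUB e) (hd : d ≠ 0) (b' : Fin (d + 1))
    (j' : Fin d) :
    ∑ b, ∑ j, (proj (e b j) * proj (e b' j')).trace • proj (e b j) = proj (e b' j') + 1 := by
  have hbasis : ∀ b, ∑ j, (proj (e b j) * proj (e b' j')).trace • proj (e b j) =
      (d : ℂ)⁻¹ • 1 + if b = b' then proj (e b' j') - (d : ℂ)⁻¹ • 1 else 0 := by
    intro b
    simp_rw [he.trace_proj_mul_proj]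
    split_ifs with hb
    · subst hb; simp [ite_smul]
    · rw [← Finset.smul_sum, he.sum_proj, add_zero]
  have hcard : ((d + 1 : ℕ) : ℂ) * (d : ℂ)⁻¹ = 1 + (d : ℂ)⁻¹ := by
    push_cast; field_simp
  rw [Finset.sum_congr rfl fun b _ => hbasis b, Finset.sum_add_distrib, Finset.sum_ite_eq',
    if_pos (Finset.mem_univ _), Finset.sum_const, Finset.card_univ, Fintype.card_fin,
    ← Nat.cast_smul_eq_nsmul ℂ, smul_smul, hcard, add_smul, one_smul]
  abel

theorem sum_trace_proj_mul_smul_proj (he : IsCompleteMUB e) (hd : d ≠ 0)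
    (X : Matrix (Fin d) (Fin d) ℂ) :
    ∑ b, ∑ j, (proj (e b j) * X).trace • proj (e b j) = X + X.trace • 1 := by
  set T : Matrix (Fin d) (Fin d) ℂ →ₗ[ℂ] Matrix (Fin d) (Fin d) ℂ :=
    ∑ b, ∑ j, (traceMul (proj (e b j))).smulRight (proj (e b j))
  have hT : ∀ X, T X = ∑ b, ∑ j, (proj (e b j) * X).trace • proj (e b j) := by
    intro X; simp [T]
  set R := T - (traceMul 1).smulRight 1
  have hR : ∀ X, R X = T X - X.trace • 1 := by intro X; simp [R]
  suffices hid : R = LinearMap.id by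
    have hX := LinearMap.congr_fun hid X
    rwa [hR, hT, LinearMap.id_apply, sub_eq_iff_eq_add] at hX
  refine LinearMap.eq_id_of_trace_eq_finrank
    (s := Set.range fun i : Fin (d + 1) × Fin d => proj (e i.1 i.2)) (fun X => ?_) ?_ ?_
  · have hmem : ∀ b j, proj (e b j) ∈ Submodule.span ℂ
        (Set.range fun i : Fin (d + 1) × Fin d => proj (e i.1 i.2)) :=
      fun b j => Submodule.subset_span ⟨(b, j), rfl⟩
    rw [hR, hT, ← he.sum_proj 0]
    exact Submodule.sub_mem _
      (Submodule.sum_mem _ fun b _ => Submodule.sum_mem _ fun j _ =>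
        Submodule.smul_mem _ _ (hmem b j))
      (Submodule.smul_mem _ _ (Submodule.sum_mem _ fun j _ => hmem 0 j))
  · rintro _ ⟨⟨b, j⟩, rfl⟩
    rw [hR, hT, he.sum_trace_proj_mul_proj_smul hd, he.trace_proj, one_smul,
      add_sub_cancel_right]
  · simp only [R, T, map_sub, map_sum, LinearMap.trace_smulRight, traceMul_apply,
      he.trace_proj_mul_proj, ↓reduceIte, Finset.sum_const, Finset.card_univ, Fintype.card_fin,
      nsmul_eq_mul, mul_one, trace_one, Module.finrank_matrix, Module.finrank_self]
    push_cast
    ring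

theorem trace_proj_mul_sum_smul_proj (he : IsCompleteMUB e) {a : Fin d → ℂ}
    (ha : ∑ k, a k = 0) (b b' : Fin (d + 1)) (j' : Fin d) :
    (proj (e b' j') * ∑ k, a k • proj (e b k)).trace = if b' = b then a j' else 0 := by
  simp only [Finset.mul_sum, Matrix.mul_smul, trace_sum, trace_smul, smul_eq_mul,
    he.trace_proj_mul_proj]
  split_ifs with hb
  · simp
  · rw [← Finset.sum_mul, ha, zero_mul]

theorem sum_sq_trace_proj_mul (he : IsCompleteMUB e) (hd : d ≠ 0)
    (X : Matrix (Fin d) (Fin d) ℂ) :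
    ∑ b, ∑ j, (proj (e b j) * X).trace ^ 2 = (X * X).trace + X.trace ^ 2 := by
  have h := congrArg (fun M => (M * X).trace) (he.sum_trace_proj_mul_smul_proj hd X)
  simpa [Finset.sum_mul, trace_sum, add_mul, sq] using h

theorem sum_trace_proj_mul_smul_proj_sub (he : IsCompleteMUB e) (hd : d ≠ 0)
    (X : Matrix (Fin d) (Fin d) ℂ) :
    ∑ b, ∑ j, (proj (e b j) * X).trace • (proj (e b j) - ((d : ℂ) + 1)⁻¹ • 1) = X := by
  have hsum : ∑ b, ∑ j, (proj (e b j) * X).trace * ((d : ℂ) + 1)⁻¹ = X.trace := by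
    simp only [← Finset.sum_mul, he.sum_trace_proj_mul, Finset.sum_const, Finset.card_univ,
      Fintype.card_fin, nsmul_eq_mul]
    push_cast
    field_simp
  simp only [smul_sub, Finset.sum_sub_distrib, smul_smul, ← Finset.sum_smul, hsum,
    he.sum_trace_proj_mul_smul_proj hd, add_sub_cancel_right]

end IsCompleteMUB

variable (e : Fin (d + 1) → Fin d → Fin d → ℂ) (ρ : Matrix (Fin d) (Fin d) ℂ)

/-- The paper's `Π b j` and `p b j` are `proj (e b j) / (d + 1)` and `basisProb e ρ b j / (d + 1)`,
so `frame e ρ` is the frame superoperator `F`. -/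
noncomputable def basisProb (b : Fin (d + 1)) (j : Fin d) : ℂ := (proj (e b j) * ρ).trace

noncomputable def frame : Matrix (Fin d) (Fin d) ℂ →ₗ[ℂ] Matrix (Fin d) (Fin d) ℂ :=
  ∑ b, ∑ j, (((d : ℂ) + 1) * basisProb e ρ b j)⁻¹ •
    (traceMul (proj (e b j))).smulRight (proj (e b j))

/-- The first summand is a traceless combination of the projectors of basis `b`, on which
`frame e ρ` acts diagonally, and is mapped to `proj (e b j) - basisProb e ρ b j • 1`; the second
corrects this to `proj (e b j) - (d + 1)⁻¹ • 1` using `frame e ρ ρ = 1`. -/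
noncomputable def framePreimage (b : Fin (d + 1)) (j : Fin d) : Matrix (Fin d) (Fin d) ℂ :=
  ((d : ℂ) + 1) • ∑ k, (basisProb e ρ b k * ((if k = j then 1 else 0) - basisProb e ρ b j)) •
    proj (e b k) + (basisProb e ρ b j - ((d : ℂ) + 1)⁻¹) • ρ

noncomputable def frameInv : Matrix (Fin d) (Fin d) ℂ →ₗ[ℂ] Matrix (Fin d) (Fin d) ℂ :=
  ∑ b, ∑ j, (traceMul (proj (e b j))).smulRight (framePreimage e ρ b j)

variable {e ρ}

theorem frame_apply (X : Matrix (Fin d) (Fin d) ℂ) :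
    frame e ρ X = ∑ b, ∑ j,
      ((((d : ℂ) + 1) * basisProb e ρ b j)⁻¹ * (proj (e b j) * X).trace) • proj (e b j) := by
  simp [frame, smul_smul]

namespace IsCompleteMUB

theorem sum_basisProb (he : IsCompleteMUB e) (hρ : ρ.trace = 1) (b : Fin (d + 1)) :
    ∑ j, basisProb e ρ b j = 1 :=
  (he.sum_trace_proj_mul b ρ).trans hρ

theorem sum_basisProb_mul_sub (he : IsCompleteMUB e) (hρ : ρ.trace = 1) (b : Fin (d + 1))
    (j : Fin d) :
    ∑ k, basisProb e ρ b k * ((if k = j then 1 else 0) - basisProb e ρ b j) = 0 := by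
  simp [mul_sub, Finset.sum_sub_distrib, ← Finset.sum_mul, he.sum_basisProb hρ]

theorem frame_apply_self (he : IsCompleteMUB e) (hq : ∀ b j, basisProb e ρ b j ≠ 0) :
    frame e ρ ρ = 1 := by
  have hc : (d : ℂ) + 1 ≠ 0 := Nat.cast_add_one_ne_zero d
  have hterm : ∀ b j, ((((d : ℂ) + 1) * basisProb e ρ b j)⁻¹ * (proj (e b j) * ρ).trace) •
      proj (e b j) = ((d : ℂ) + 1)⁻¹ • proj (e b j) := by
    intro b j
    rw [← basisProb, mul_inv, mul_assoc, inv_mul_cancel₀ (hq b j), mul_one]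
  simp only [frame_apply, hterm, ← Finset.smul_sum, he.sum_proj, Finset.sum_const,
    Finset.card_univ, Fintype.card_fin, ← Nat.cast_smul_eq_nsmul ℂ, smul_smul]
  push_cast
  rw [inv_mul_cancel₀ hc, one_smul]

theorem frame_apply_sum_smul_proj (he : IsCompleteMUB e) {a : Fin d → ℂ} (ha : ∑ k, a k = 0)
    (b : Fin (d + 1)) :
    frame e ρ (∑ k, a k • proj (e b k)) =
      ∑ k, ((((d : ℂ) + 1) * basisProb e ρ b k)⁻¹ * a k) • proj (e b k) := by
  rw [frame_apply]
  simp only [he.trace_proj_mul_sum_smul_proj ha, mul_ite, mul_zero, ite_smul, zero_smul,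
    Finset.sum_ite_irrel, Finset.sum_const_zero, Finset.sum_ite_eq', Finset.mem_univ, if_true]

theorem frame_framePreimage (he : IsCompleteMUB e) (hρ : ρ.trace = 1)
    (hq : ∀ b j, basisProb e ρ b j ≠ 0) (b : Fin (d + 1)) (j : Fin d) :
    frame e ρ (framePreimage e ρ b j) = proj (e b j) - ((d : ℂ) + 1)⁻¹ • 1 := by
  have hc : (d : ℂ) + 1 ≠ 0 := Nat.cast_add_one_ne_zero d
  have hcoeff : ∀ k, ((d : ℂ) + 1) * ((((d : ℂ) + 1) * basisProb e ρ b k)⁻¹ *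
      (basisProb e ρ b k * ((if k = j then 1 else 0) - basisProb e ρ b j))) =
      (if k = j then 1 else 0) - basisProb e ρ b j := by
    intro k
    have := hq b k
    field_simp
  rw [framePreimage, map_add, map_smul, map_smul,
    he.frame_apply_sum_smul_proj (he.sum_basisProb_mul_sub hρ b j), he.frame_apply_self hq,
    Finset.smul_sum]
  simp only [smul_smul, hcoeff, sub_smul, Finset.sum_sub_distrib, ite_smul, one_smul, zero_smul,
    Finset.sum_ite_eq', Finset.mem_univ, if_true, ← Finset.smul_sum, he.sum_proj]
  abel

theorem frame_comp_frameInv (he : IsCompleteMUB e) (hd : d ≠ 0) (hρ : ρ.trace = 1)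
    (hq : ∀ b j, basisProb e ρ b j ≠ 0) : frame e ρ ∘ₗ frameInv e ρ = LinearMap.id := by
  ext1 X
  simp only [frameInv, LinearMap.comp_apply, LinearMap.sum_apply,
    LinearMap.smulRight_apply, traceMul_apply, map_sum, map_smul,
    he.frame_framePreimage hρ hq, LinearMap.id_apply]
  exact he.sum_trace_proj_mul_smul_proj_sub hd X

theorem trace_proj_mul_framePreimage (he : IsCompleteMUB e) (hρ : ρ.trace = 1)
    (b : Fin (d + 1)) (j : Fin d) :
    (proj (e b j) * framePreimage e ρ b j).trace =
      ((d : ℂ) + 1) * basisProb e ρ b j * (1 - basisProb e ρ b j) +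
        (basisProb e ρ b j - ((d : ℂ) + 1)⁻¹) * basisProb e ρ b j := by
  rw [framePreimage, Matrix.mul_add, Matrix.mul_smul, Matrix.mul_smul, trace_add, trace_smul,
    trace_smul, he.trace_proj_mul_sum_smul_proj (he.sum_basisProb_mul_sub hρ b j), if_pos rfl,
    if_pos rfl, ← basisProb, smul_eq_mul, smul_eq_mul, mul_assoc]

theorem trace_frameInv (he : IsCompleteMUB e) (hd : d ≠ 0) (hρ : ρ.trace = 1) :
    LinearMap.trace ℂ _ (frameInv e ρ) = (d : ℂ) ^ 2 + d - d * (ρ * ρ).trace := by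
  have hbasis : ∀ b, ∑ j, (proj (e b j) * framePreimage e ρ b j).trace =
      (d : ℂ) + 1 - ((d : ℂ) + 1)⁻¹ - d * ∑ j, basisProb e ρ b j ^ 2 := by
    intro b
    have hterm : ∀ j, (proj (e b j) * framePreimage e ρ b j).trace =
        ((d : ℂ) + 1 - ((d : ℂ) + 1)⁻¹) * basisProb e ρ b j - d * basisProb e ρ b j ^ 2 := by
      intro j
      rw [he.trace_proj_mul_framePreimage hρ]
      ring
    simp only [hterm, Finset.sum_sub_distrib, ← Finset.mul_sum, he.sum_basisProb hρ, mul_one]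
  have hsq : ∑ b, ∑ j, basisProb e ρ b j ^ 2 = (ρ * ρ).trace + 1 := by
    simpa only [basisProb, hρ, one_pow] using he.sum_sq_trace_proj_mul hd ρ
  simp only [frameInv, map_sum, LinearMap.trace_smulRight, traceMul_apply, hbasis,
    Finset.sum_sub_distrib, ← Finset.mul_sum, hsq, Finset.sum_const, Finset.card_univ,
    Fintype.card_fin, nsmul_eq_mul]
  have hc : (d : ℂ) + 1 ≠ 0 := Nat.cast_add_one_ne_zero d
  push_cast
  field_simp
  ring

end IsCompleteMUB

end MUB

/-- Here `F` is the ℂ-linear extension of the ℝ-linear frame superoperator on Hermitian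
matrices; since the matrix algebra is the complexification of the real space of Hermitian
matrices, the ℂ-linear trace of (the extension of) `F⁻¹` coincides with its ℝ-linear trace. -/
theorem stmt_9_general (d : ℕ) (hd : 1 ≤ d) (e : Fin (d + 1) → Fin d → Fin d → ℂ)
    (hortho : ∀ b j k, star (e b j) ⬝ᵥ e b k = if j = k then 1 else 0)
    (hmub : ∀ b b', b ≠ b' → ∀ j j', ‖star (e b j) ⬝ᵥ e b' j'‖ ^ 2 = 1 / d)
    (ρ : Matrix (Fin d) (Fin d) ℂ) (hρtr : ρ.trace = 1)
    (P : Fin (d + 1) → Fin d → Matrix (Fin d) (Fin d) ℂ)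
    (hPdef : ∀ b j, P b j = ((d : ℂ) + 1)⁻¹ • vecMulVec (e b j) (star (e b j)))
    (p : Fin (d + 1) → Fin d → ℝ)
    (hp : ∀ b j, (p b j : ℂ) = (P b j * ρ).trace) (hppos : ∀ b j, 0 < p b j)
    (F : Matrix (Fin d) (Fin d) ℂ →ₗ[ℂ] Matrix (Fin d) (Fin d) ℂ)
    (hF : ∀ X, F X = ∑ b, ∑ j, (((p b j : ℂ))⁻¹ * (P b j * X).trace) • P b j) :
    Function.Bijective F ∧
    ∀ G : Matrix (Fin d) (Fin d) ℂ →ₗ[ℂ] Matrix (Fin d) (Fin d) ℂ,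
      (∀ X, G (F X) = X) → (∀ X, F (G X) = X) →
      LinearMap.trace ℂ (Matrix (Fin d) (Fin d) ℂ) G =
        (d : ℂ) ^ 2 + d - d * (ρ * ρ).trace ∧
      LinearMap.trace ℂ (Matrix (Fin d) (Fin d) ℂ) G - (ρ * ρ).trace =
        ((d : ℂ) + 1) * ((d : ℂ) - (ρ * ρ).trace) := by
  have he : MUB.IsCompleteMUB e := ⟨hortho, hmub⟩
  have hd0 : d ≠ 0 := by omega
  have hc : (d : ℂ) + 1 ≠ 0 := Nat.cast_add_one_ne_zero d
  have hprob : ∀ b j, MUB.basisProb e ρ b j = ((d : ℂ) + 1) * p b j := by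
    intro b j
    rw [hp, hPdef, smul_mul, trace_smul, smul_eq_mul, mul_inv_cancel_left₀ hc, MUB.basisProb,
      MUB.proj]
  have hq : ∀ b j, MUB.basisProb e ρ b j ≠ 0 := fun b j => by
    rw [hprob]
    exact mul_ne_zero hc (Complex.ofReal_ne_zero.mpr (hppos b j).ne')
  have hFeq : F = MUB.frame e ρ := by
    ext1 X
    rw [hF, MUB.frame_apply]
    refine Finset.sum_congr rfl fun b _ => Finset.sum_congr rfl fun j _ => ?_
    rw [hPdef, hprob, smul_mul, trace_smul, smul_smul, smul_eq_mul, MUB.proj]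
    congr 1
    field_simp
  have hFG : ∀ X, F (MUB.frameInv e ρ X) = X := fun X => by
    rw [hFeq]
    exact LinearMap.congr_fun (he.frame_comp_frameInv hd0 hρtr hq) X
  have hsurj : Function.Surjective F := fun X => ⟨_, hFG X⟩
  refine ⟨⟨LinearMap.injective_iff_surjective.mpr hsurj, hsurj⟩, fun G hGF _ => ?_⟩
  have hG : G = MUB.frameInv e ρ := by
    ext1 X
    simpa only [hFG] using hGF (MUB.frameInv e ρ X)
  rw [hG, he.trace_frameInv hd0 hρtr]
  exact ⟨rfl, by ring⟩

/-- Scaled MSE of the BLUE for the MUB measurement (paper's Eq. (15)): the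
frame superoperator `F` at a full-rank state `ρ` is bijective and the trace of
its inverse equals `d² + d - d·tr(ρ²)`, so that `Tr(F⁻¹) - tr(ρ²) =
(d+1)(d - tr ρ²)`.  Here `F` is taken as the ℂ-linear extension of the
ℝ-linear frame superoperator on Hermitian matrices; since the matrix algebra
is the complexification of the real space of Hermitian matrices, the ℂ-linear
trace of (the extension of) `F⁻¹` coincides with its ℝ-linear trace. -/
theorem stmt_9 (d : ℕ) (hd : 1 ≤ d) (e : Fin (d + 1) → Fin d → Fin d → ℂ)
    (hortho : ∀ b j k, star (e b j) ⬝ᵥ e b k = if j = k then 1 else 0)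
    (hmub : ∀ b b', b ≠ b' → ∀ j j', ‖star (e b j) ⬝ᵥ e b' j'‖ ^ 2 = 1 / d)
    (ρ : Matrix (Fin d) (Fin d) ℂ) (hρ : ρ.PosDef) (hρtr : ρ.trace = 1)
    (P : Fin (d + 1) → Fin d → Matrix (Fin d) (Fin d) ℂ)
    (hPdef : ∀ b j, P b j = ((d : ℂ) + 1)⁻¹ • vecMulVec (e b j) (star (e b j)))
    (p : Fin (d + 1) → Fin d → ℝ)
    (hp : ∀ b j, (p b j : ℂ) = (P b j * ρ).trace) (hppos : ∀ b j, 0 < p b j)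
    (F : Matrix (Fin d) (Fin d) ℂ →ₗ[ℂ] Matrix (Fin d) (Fin d) ℂ)
    (hF : ∀ X, F X = ∑ b, ∑ j, (((p b j : ℂ))⁻¹ * (P b j * X).trace) • P b j) :
    Function.Bijective F ∧
    ∀ G : Matrix (Fin d) (Fin d) ℂ →ₗ[ℂ] Matrix (Fin d) (Fin d) ℂ,
      (∀ X, G (F X) = X) → (∀ X, F (G X) = X) →
      LinearMap.trace ℂ (Matrix (Fin d) (Fin d) ℂ) G =
        (d : ℂ) ^ 2 + d - d * (ρ * ρ).trace ∧
      LinearMap.trace ℂ (Matrix (Fin d) (Fin d) ℂ) G - (ρ * ρ).trace =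
        ((d : ℂ) + 1) * ((d : ℂ) - (ρ * ρ).trace) :=
  stmt_9_general d hd e hortho hmub ρ hρtr P hPdef p hp hppos F hF
end

section
/- Let d ≥ 1, let ψ : Fin d² → ℂᵈ be unit vectors satisfying |⟨ψ_ξ, ψ_ζ⟩|² = (d·δ_{ξζ} + 1)/(d + 1) for all ξ, ζ, and let ρ be a d×d Hermitian positive definite matrix with tr ρ = 1. Define Π_ξ := |ψ_ξ⟩⟨ψ_ξ|/d and p_ξ := tr(Π_ξ ρ) > 0, and let F be the ℝ-linear map on the real vector space of d×d Hermitian matrices given by F(X) = ∑_ξ p_ξ⁻¹ tr(Π_ξ X) Π_ξ. Then F is bijective, and the trace of the ℝ-linear endomorphism F⁻¹ equals d² + d − 1. Consequently the scaled mean-square error of the best linear unbiased estimator, Tr(F⁻¹) − tr(ρ²), equals d² + d − 1 − tr(ρ²). -/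
/-!
By the SIC overlap condition, the projectors `Π_ξ` and the matrices `D_ξ = d(d+1) Π_ξ - 1` are
biorthogonal for the trace pairing: `tr(D_ξ Π_ζ) = δ_ξζ`. As there are `d²` of each, both families
are bases of the matrix algebra, and `X = ∑ tr(D_ξ X) Π_ξ = ∑ tr(Π_ξ X) D_ξ`. Hence
`F⁻¹ X = ∑ p_ξ tr(D_ξ X) D_ξ`, whose trace is `∑ p_ξ tr(D_ξ²) = (d² + d - 1) ∑ p_ξ`, while
`∑ p_ξ = tr ρ = 1`.
-/

open Matrix ComplexOrder

namespace Module

variable {K V ι : Type*} [Field K] [AddCommGroup V] [Module K V] [Fintype ι]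

def IsBiorthogonal [DecidableEq ι] (φ : ι → Dual K V) (v : ι → V) : Prop :=
  ∀ i j, φ i (v j) = if i = j then 1 else 0

def rankOneSum (c : ι → K) (φ : ι → Dual K V) (v : ι → V) : V →ₗ[K] V :=
  ∑ i, c i • (φ i).smulRight (v i)

theorem rankOneSum_apply (c : ι → K) (φ : ι → Dual K V) (v : ι → V) (x : V) :
    rankOneSum c φ v x = ∑ i, (c i * φ i x) • v i := by
  simp [rankOneSum, mul_smul]

theorem trace_rankOneSum [FiniteDimensional K V] (c : ι → K) (φ : ι → Dual K V) (v : ι → V) :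
    LinearMap.trace K V (rankOneSum c φ v) = ∑ i, c i * φ i (v i) := by
  simp [rankOneSum]

variable [DecidableEq ι] {φ : ι → Dual K V} {v : ι → V}

theorem IsBiorthogonal.rankOneSum_comp (h : IsBiorthogonal φ v)
    (c e : ι → K) (χ : ι → Dual K V) (w : ι → V) :
    rankOneSum c φ w ∘ₗ rankOneSum e χ v = rankOneSum (c * e) χ w := by
  ext x
  simp [rankOneSum_apply, h _ _, smul_smul, mul_assoc, mul_comm]

theorem IsBiorthogonal.rankOneSum_one [FiniteDimensional K V] (h : IsBiorthogonal φ v)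
    (hcard : Fintype.card ι = finrank K V) :
    rankOneSum 1 φ v = LinearMap.id := by
  have hli : LinearIndependent K v := by
    rw [Fintype.linearIndependent_iff]
    intro g hg i
    simpa [h _ _] using congrArg (φ i) hg
  refine LinearMap.ext_on_range (hli.span_eq_top_of_card_eq_finrank' hcard) fun j => ?_
  simp [rankOneSum_apply, h _ _]

end Module

open Module

def Matrix.traceDual {n R : Type*} [Fintype n] [DecidableEq n] [CommRing R] (A : Matrix n n R) :
    Dual R (Matrix n n R) :=
  traceLinearMap n R R ∘ₗ LinearMap.mulLeft R A

@[simp]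
theorem Matrix.traceDual_apply {n R : Type*} [Fintype n] [DecidableEq n] [CommRing R]
    (A X : Matrix n n R) : traceDual A X = (A * X).trace :=
  rfl

section SIC

variable {d : ℕ} {ι : Type*} (ψ : ι → Fin d → ℂ)

noncomputable def sicProj (ξ : ι) : Matrix (Fin d) (Fin d) ℂ :=
  (d : ℂ)⁻¹ • vecMulVec (ψ ξ) (star (ψ ξ))

noncomputable def sicDual (ξ : ι) : Matrix (Fin d) (Fin d) ℂ :=
  ((d : ℂ) * (d + 1)) • sicProj ψ ξ - 1

def IsSIC_s10 [DecidableEq ι] : Prop :=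
  (∀ ξ, star (ψ ξ) ⬝ᵥ ψ ξ = 1) ∧
    ∀ ξ ζ, ‖star (ψ ξ) ⬝ᵥ ψ ζ‖ ^ 2 = ((d : ℝ) * (if ξ = ζ then 1 else 0) + 1) / (d + 1)

variable {ψ}

theorem trace_sicProj (hunit : ∀ ξ, star (ψ ξ) ⬝ᵥ ψ ξ = 1) (ξ : ι) :
    (sicProj ψ ξ).trace = (d : ℂ)⁻¹ := by
  rw [sicProj, trace_smul, trace_vecMulVec, dotProduct_comm, hunit, smul_eq_mul, mul_one]

theorem trace_sicDual (hd : d ≠ 0) (hunit : ∀ ξ, star (ψ ξ) ⬝ᵥ ψ ξ = 1) (ξ : ι) :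
    (sicDual ψ ξ).trace = 1 := by
  have hd' : (d : ℂ) ≠ 0 := by exact_mod_cast hd
  rw [sicDual, trace_sub, trace_smul, trace_sicProj hunit, trace_one, Fintype.card_fin,
    smul_eq_mul]
  field_simp
  ring

variable [DecidableEq ι]

theorem trace_sicProj_mul_sicProj
    (hsic : ∀ ξ ζ, ‖star (ψ ξ) ⬝ᵥ ψ ζ‖ ^ 2 =
      ((d : ℝ) * (if ξ = ζ then 1 else 0) + 1) / (d + 1)) (ξ ζ : ι) :
    (sicProj ψ ξ * sicProj ψ ζ).trace =
      ((d : ℂ) * (if ξ = ζ then 1 else 0) + 1) / ((d + 1) * d ^ 2) := by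
  have hnorm : (star (ψ ξ) ⬝ᵥ ψ ζ) * (ψ ξ ⬝ᵥ star (ψ ζ)) = (‖star (ψ ξ) ⬝ᵥ ψ ζ‖ ^ 2 : ℝ) := by
    have hconj : ψ ξ ⬝ᵥ star (ψ ζ) = starRingEnd ℂ (star (ψ ξ) ⬝ᵥ ψ ζ) := by
      simp [dotProduct, mul_comm]
    rw [hconj, Complex.mul_conj, Complex.normSq_eq_norm_sq]
  simp only [sicProj, smul_mul_smul_comm, vecMulVec_mul_vecMulVec, trace_smul, trace_vecMulVec,
    dotProduct_smul, smul_eq_mul]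
  rw [hnorm, hsic]
  have hd : (d : ℂ) + 1 ≠ 0 := by exact_mod_cast d.succ_ne_zero
  push_cast [apply_ite Complex.ofReal]
  field_simp

theorem trace_sicDual_mul_sicProj (hd : d ≠ 0) (hψ : IsSIC_s10 ψ) (ξ ζ : ι) :
    (sicDual ψ ξ * sicProj ψ ζ).trace = if ξ = ζ then 1 else 0 := by
  have hd' : (d : ℂ) ≠ 0 := by exact_mod_cast hd
  have hd1 : (d : ℂ) + 1 ≠ 0 := by exact_mod_cast d.succ_ne_zero
  rw [sicDual, sub_mul, one_mul, trace_sub, smul_mul_assoc, trace_smul,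
    trace_sicProj_mul_sicProj hψ.2, trace_sicProj hψ.1, smul_eq_mul]
  field_simp
  ring

theorem trace_sicDual_mul_self (hd : d ≠ 0) (hψ : IsSIC_s10 ψ) (ξ : ι) :
    (sicDual ψ ξ * sicDual ψ ξ).trace = (d : ℂ) ^ 2 + d - 1 := by
  nth_rw 2 [sicDual]
  rw [mul_sub, mul_one, trace_sub, mul_smul_comm, trace_smul,
    trace_sicDual_mul_sicProj hd hψ, if_pos rfl, trace_sicDual hd hψ.1, smul_eq_mul]
  ring

theorem isBiorthogonal_sicDual_sicProj (hd : d ≠ 0) (hψ : IsSIC_s10 ψ) :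
    IsBiorthogonal (fun ξ => traceDual (sicDual ψ ξ)) (sicProj ψ) :=
  trace_sicDual_mul_sicProj hd hψ

theorem isBiorthogonal_sicProj_sicDual (hd : d ≠ 0) (hψ : IsSIC_s10 ψ) :
    IsBiorthogonal (fun ξ => traceDual (sicProj ψ ξ)) (sicDual ψ) := fun ξ ζ => by
  rw [traceDual_apply, trace_mul_comm, trace_sicDual_mul_sicProj hd hψ]
  exact if_congr eq_comm rfl rfl

theorem sum_trace_sicProj_mul [Fintype ι] (hcard : Fintype.card ι = d ^ 2) (hd : d ≠ 0)
    (hψ : IsSIC_s10 ψ) (X : Matrix (Fin d) (Fin d) ℂ) :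
    ∑ ξ, (sicProj ψ ξ * X).trace = X.trace := by
  have hX := LinearMap.congr_fun ((isBiorthogonal_sicProj_sicDual hd hψ).rankOneSum_one
    (by simp [Module.finrank_matrix, hcard, sq])) X
  simp only [rankOneSum_apply, Pi.one_apply, one_mul, LinearMap.id_apply] at hX
  conv_rhs => rw [← hX]
  simp [trace_sum, trace_sicDual hd hψ.1]

end SIC

theorem stmt_10_general (d : ℕ) (hd : 1 ≤ d) (ψ : Fin (d ^ 2) → Fin d → ℂ)
    (hunit : ∀ ξ, star (ψ ξ) ⬝ᵥ ψ ξ = 1)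
    (hsic : ∀ ξ ζ, ‖star (ψ ξ) ⬝ᵥ ψ ζ‖ ^ 2 =
      ((d : ℝ) * (if ξ = ζ then 1 else 0) + 1) / (d + 1))
    (ρ : Matrix (Fin d) (Fin d) ℂ) (hρtr : ρ.trace = 1)
    (P : Fin (d ^ 2) → Matrix (Fin d) (Fin d) ℂ)
    (hPdef : ∀ ξ, P ξ = ((d : ℂ))⁻¹ • vecMulVec (ψ ξ) (star (ψ ξ)))
    (p : Fin (d ^ 2) → ℝ)
    (hp : ∀ ξ, (p ξ : ℂ) = (P ξ * ρ).trace) (hppos : ∀ ξ, 0 < p ξ)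
    (F : Matrix (Fin d) (Fin d) ℂ →ₗ[ℂ] Matrix (Fin d) (Fin d) ℂ)
    (hF : ∀ X, F X = ∑ ξ, (((p ξ : ℂ))⁻¹ * (P ξ * X).trace) • P ξ) :
    Function.Bijective F ∧
    ∀ G : Matrix (Fin d) (Fin d) ℂ →ₗ[ℂ] Matrix (Fin d) (Fin d) ℂ,
      (∀ X, G (F X) = X) → (∀ X, F (G X) = X) →
      LinearMap.trace ℂ (Matrix (Fin d) (Fin d) ℂ) G = (d : ℂ) ^ 2 + d - 1 ∧
      LinearMap.trace ℂ (Matrix (Fin d) (Fin d) ℂ) G - (ρ * ρ).trace =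
        (d : ℂ) ^ 2 + d - 1 - (ρ * ρ).trace := by
  obtain rfl : P = sicProj ψ := funext hPdef
  have hd0 : d ≠ 0 := by omega
  have hψ : IsSIC_s10 ψ := ⟨hunit, hsic⟩
  have hcard : Fintype.card (Fin (d ^ 2)) = Module.finrank ℂ (Matrix (Fin d) (Fin d) ℂ) := by
    simp [Module.finrank_matrix, sq]
  have hp0 : ∀ ξ, (p ξ : ℂ) ≠ 0 := fun ξ => Complex.ofReal_ne_zero.mpr (hppos ξ).ne'
  have hFeq : F = rankOneSum (fun ξ => (p ξ : ℂ)⁻¹) (fun ξ => traceDual (sicProj ψ ξ))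
      (sicProj ψ) :=
    LinearMap.ext fun X => by rw [hF, rankOneSum_apply]; rfl
  set G₀ := rankOneSum (fun ξ => (p ξ : ℂ)) (fun ξ => traceDual (sicDual ψ ξ)) (sicDual ψ)
  have hG₀F : G₀ ∘ₗ F = LinearMap.id := by
    rw [hFeq, (isBiorthogonal_sicDual_sicProj hd0 hψ).rankOneSum_comp]
    convert (isBiorthogonal_sicProj_sicDual hd0 hψ).rankOneSum_one hcard
    exact funext fun ξ => mul_inv_cancel₀ (hp0 ξ)
  have hFG₀ : F ∘ₗ G₀ = LinearMap.id := by
    rw [hFeq, (isBiorthogonal_sicProj_sicDual hd0 hψ).rankOneSum_comp]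
    convert (isBiorthogonal_sicDual_sicProj hd0 hψ).rankOneSum_one hcard
    exact funext fun ξ => inv_mul_cancel₀ (hp0 ξ)
  refine ⟨Function.bijective_iff_has_inverse.2 ⟨G₀, LinearMap.congr_fun hG₀F,
    LinearMap.congr_fun hFG₀⟩, fun G hGF _ => ?_⟩
  have hG : G = G₀ := by
    have hGF' : G ∘ₗ F = LinearMap.id := LinearMap.ext hGF
    rw [← LinearMap.comp_id G, ← hFG₀, ← LinearMap.comp_assoc, hGF', LinearMap.id_comp]
  have htr : LinearMap.trace ℂ _ G = (d : ℂ) ^ 2 + d - 1 := by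
    rw [hG, trace_rankOneSum]
    simp only [traceDual_apply, trace_sicDual_mul_self hd0 hψ, hp]
    rw [← Finset.sum_mul, sum_trace_sicProj_mul (Fintype.card_fin _) hd0 hψ, hρtr,
      one_mul]
  exact ⟨htr, by rw [htr]⟩

/-- Scaled MSE of the BLUE for the SIC measurement (paper's Eq. (14)): the
frame superoperator `F` at a full-rank state `ρ` is bijective and the trace of
its inverse equals `d² + d - 1`, so that `Tr(F⁻¹) - tr(ρ²) = d² + d - 1 - tr ρ²`.
Here `F` is taken as the ℂ-linear extension of the ℝ-linear frame superoperator
on Hermitian matrices; since the matrix algebra is the complexification of the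
real space of Hermitian matrices, the ℂ-linear trace of (the extension of)
`F⁻¹` coincides with its ℝ-linear trace. -/
theorem stmt_10 (d : ℕ) (hd : 1 ≤ d) (ψ : Fin (d ^ 2) → Fin d → ℂ)
    (hunit : ∀ ξ, star (ψ ξ) ⬝ᵥ ψ ξ = 1)
    (hsic : ∀ ξ ζ, ‖star (ψ ξ) ⬝ᵥ ψ ζ‖ ^ 2 =
      ((d : ℝ) * (if ξ = ζ then 1 else 0) + 1) / (d + 1))
    (ρ : Matrix (Fin d) (Fin d) ℂ) (hρ : ρ.PosDef) (hρtr : ρ.trace = 1)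
    (P : Fin (d ^ 2) → Matrix (Fin d) (Fin d) ℂ)
    (hPdef : ∀ ξ, P ξ = ((d : ℂ))⁻¹ • vecMulVec (ψ ξ) (star (ψ ξ)))
    (p : Fin (d ^ 2) → ℝ)
    (hp : ∀ ξ, (p ξ : ℂ) = (P ξ * ρ).trace) (hppos : ∀ ξ, 0 < p ξ)
    (F : Matrix (Fin d) (Fin d) ℂ →ₗ[ℂ] Matrix (Fin d) (Fin d) ℂ)
    (hF : ∀ X, F X = ∑ ξ, (((p ξ : ℂ))⁻¹ * (P ξ * X).trace) • P ξ) :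
    Function.Bijective F ∧
    ∀ G : Matrix (Fin d) (Fin d) ℂ →ₗ[ℂ] Matrix (Fin d) (Fin d) ℂ,
      (∀ X, G (F X) = X) → (∀ X, F (G X) = X) →
      LinearMap.trace ℂ (Matrix (Fin d) (Fin d) ℂ) G = (d : ℂ) ^ 2 + d - 1 ∧
      LinearMap.trace ℂ (Matrix (Fin d) (Fin d) ℂ) G - (ρ * ρ).trace =
        (d : ℂ) ^ 2 + d - 1 - (ρ * ρ).trace :=
  stmt_10_general d hd ψ hunit hsic ρ hρtr P hPdef p hp hppos F hF
end

section
/- Let d ≥ 2, let r be an integer with 1 ≤ r ≤ d−1, and let a, b, c ∈ ℝ. Define the real symmetric d×d matrix M by M_{jk} = (1+δ_{jk})·a if both j,k ≤ r, M_{jk} = (1+δ_{jk})·c if both j,k > r, and M_{jk} = b otherwise; and let P = I − (1/d)·J, where J is the d×d all-ones matrix. Then the characteristic polynomial of P·M·P equals X·(X−a)^{r−1}·(X−c)^{d−r−1}·(X−β), where β = ((r+1)(d−r)·a + r(d−r+1)·c − 2r(d−r)·b)/d. In particular, P·M·P has eigenvalue a with multiplicity r−1, eigenvalue c with multiplicity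 d−r−1, eigenvalue β with multiplicity 1, and eigenvalue 0 (attained on the all-ones vector). -/
open Matrix Polynomial

/-!
Let `σ : Fin d → Fin 2` record the block of an index. Both `M` and `P` are of the form
`A = diagonal (g ∘ σ) + K.submatrix σ σ` with `K` a `2 × 2` matrix, and such matrices are closed
under products. With `U` the incidence matrix of `σ`, `A = diagonal (g ∘ σ) + U K Uᵀ`, and the
matrix determinant lemma, at every `t` outside the range of `g`, reduces `det (t - A)` to a `2 × 2`
determinant: `χ_A · ∏ₖ (X - g k) = ∏ₖ (X - g k) ^ |σ⁻¹ k| · χ_Q` for the quotient matrix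
`Q = diagonal g + K · diagonal |σ⁻¹ k|`, and `A ↦ Q` is multiplicative. The quotient of `P` is
singular, so the quotient of `P M P` has characteristic polynomial `X (X - tr Q)`, and `tr Q = β`.
-/

open Finset

section BlockConstant

variable {ι κ : Type*}

def fiberCard [Fintype ι] [DecidableEq κ] (σ : ι → κ) (k : κ) : ℕ := #{i | σ i = k}

def incidence (R : Type*) [Zero R] [One R] [DecidableEq κ] (σ : ι → κ) : Matrix ι κ R :=
  Matrix.of fun i k => if σ i = k then 1 else 0

def diagAddBlockConst {R : Type*} [Semiring R] [DecidableEq ι] (σ : ι → κ) (g : κ → R)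
    (K : Matrix κ κ R) : Matrix ι ι R :=
  diagonal (g ∘ σ) + K.submatrix σ σ

-- The action of `diagAddBlockConst σ g K` on block-constant vectors, in the basis of block
-- indicators.
def quotientMatrix {R : Type*} [Semiring R] [Fintype ι] [Fintype κ] [DecidableEq κ] (σ : ι → κ)
    (g : κ → R) (K : Matrix κ κ R) : Matrix κ κ R :=
  diagonal g + K * diagonal fun k => (fiberCard σ k : R)

lemma prod_comp_eq_prod_pow_fiberCard {M : Type*} [CommMonoid M] [Fintype ι] [Fintype κ]
    [DecidableEq κ] (σ : ι → κ) (f : κ → M) :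
    ∏ i, f (σ i) = ∏ k, f k ^ fiberCard σ k := by
  simp [← Finset.prod_fiberwise' univ σ f, fiberCard]

section Semiring

variable {R : Type*} [Semiring R] [DecidableEq κ] (σ : ι → κ)

lemma submatrix_eq_incidence_mul [Fintype κ] (K : Matrix κ κ R) :
    K.submatrix σ σ = incidence R σ * K * (incidence R σ)ᵀ := by
  ext i j
  simp [incidence, Matrix.mul_apply]

lemma incidence_transpose_mul_incidence [Fintype ι] :
    (incidence R σ)ᵀ * incidence R σ = diagonal fun k => (fiberCard σ k : R) := by
  ext k l
  rw [Matrix.mul_apply, diagonal_apply]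
  split_ifs with h
  · subst h
    simp [incidence, fiberCard, ← ite_and]
  · refine Finset.sum_eq_zero fun j _ => ?_
    by_cases hj : σ j = k <;> simp [incidence, hj, h]

lemma diagonal_comp_mul_incidence [Fintype ι] [DecidableEq ι] [Fintype κ] (g : κ → R) :
    diagonal (g ∘ σ) * incidence R σ = incidence R σ * diagonal g := by
  ext i k
  by_cases h : σ i = k <;> simp [incidence, h, diagonal_mul, mul_diagonal]

lemma incidence_transpose_mul_diagonal_comp [Fintype ι] [DecidableEq ι] [Fintype κ]
    (g : κ → R) :
    (incidence R σ)ᵀ * diagonal (g ∘ σ) = diagonal g * (incidence R σ)ᵀ := by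
  ext k i
  by_cases h : σ i = k <;> simp [incidence, h, diagonal_mul, mul_diagonal]

lemma diagAddBlockConst_mul [Fintype ι] [DecidableEq ι] [Fintype κ] (g h : κ → R)
    (K L : Matrix κ κ R) :
    diagAddBlockConst σ g K * diagAddBlockConst σ h L =
      diagAddBlockConst σ (g * h)
        (diagonal g * L + K * diagonal h + K * diagonal (fun k => (fiberCard σ k : R)) * L) := by
  have hgh : diagonal ((g * h) ∘ σ) = diagonal (g ∘ σ) * diagonal (h ∘ σ) :=
    (diagonal_mul_diagonal _ _).symm
  simp only [diagAddBlockConst, hgh, submatrix_eq_incidence_mul,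
    ← incidence_transpose_mul_incidence, Matrix.add_mul, Matrix.mul_add, Matrix.mul_assoc]
  simp only [← Matrix.mul_assoc (diagonal _) (incidence R σ), diagonal_comp_mul_incidence,
    incidence_transpose_mul_diagonal_comp,
    ← Matrix.mul_assoc (incidence R σ)ᵀ (incidence R σ)]
  simp only [Matrix.mul_assoc]
  abel

end Semiring

lemma quotientMatrix_mul {R : Type*} [CommSemiring R] [Fintype ι] [Fintype κ] [DecidableEq κ]
    (σ : ι → κ) (g h : κ → R) (K L : Matrix κ κ R) :
    quotientMatrix σ g K * quotientMatrix σ h L =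
      quotientMatrix σ (g * h)
        (diagonal g * L + K * diagonal h + K * diagonal (fun k => (fiberCard σ k : R)) * L) := by
  have hcomm : diagonal (fun k => (fiberCard σ k : R)) * diagonal h =
      diagonal h * diagonal (fun k => (fiberCard σ k : R)) := by
    simp only [diagonal_mul_diagonal, mul_comm]
  have hgh : diagonal (g * h) = diagonal g * diagonal h := (diagonal_mul_diagonal _ _).symm
  simp only [quotientMatrix, hgh, add_mul, mul_add, Matrix.mul_assoc, hcomm]
  abel

variable {R : Type*} [Field R] [Fintype ι] [DecidableEq ι] [Fintype κ] [DecidableEq κ]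
  (σ : ι → κ)

lemma det_scalar_sub_diagAddBlockConst_mul_prod (f : κ → R) (K : Matrix κ κ R) (t : R)
    (ht : ∀ k, t - f k ≠ 0) :
    det (scalar ι t - diagAddBlockConst σ f K) * ∏ k, (t - f k) =
      (∏ k, (t - f k) ^ fiberCard σ k) * det (scalar κ t - quotientMatrix σ f K) := by
  set g : κ → R := fun k => t - f k
  have hg : ∀ k, g⁻¹ k * g k = 1 := fun k => inv_mul_cancel₀ (ht k)
  have hA : scalar ι t - diagAddBlockConst σ f K =
      diagonal (g ∘ σ) + incidence R σ * -(K * (incidence R σ)ᵀ) := by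
    rw [diagAddBlockConst, submatrix_eq_incidence_mul, scalar_apply, Matrix.mul_neg,
      ← Matrix.mul_assoc, sub_add_eq_sub_sub, diagonal_sub, ← sub_eq_add_neg]
    rfl
  have hQ : scalar κ t - quotientMatrix σ f K =
      diagonal g - K * diagonal (fun k => (fiberCard σ k : R)) := by
    rw [quotientMatrix, scalar_apply, sub_add_eq_sub_sub, diagonal_sub]
  have hdet : (diagonal (g ∘ σ)).det = ∏ k, g k ^ fiberCard σ k := by
    rw [det_diagonal]
    exact prod_comp_eq_prod_pow_fiberCard σ g
  have hunit : IsUnit (diagonal (g ∘ σ)).det := by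
    simpa [isUnit_iff_ne_zero, Finset.prod_ne_zero_iff] using fun i => ht (σ i)
  have hinv : (diagonal (g ∘ σ))⁻¹ = diagonal (g⁻¹ ∘ σ) := by
    refine inv_eq_left_inv ?_
    simp only [diagonal_mul_diagonal, Function.comp_apply, hg, diagonal_one]
  have hcore : 1 + -(K * (incidence R σ)ᵀ) * diagonal (g⁻¹ ∘ σ) * incidence R σ =
      1 - K * diagonal (fun k => (fiberCard σ k : R)) * diagonal g⁻¹ := by
    rw [Matrix.mul_assoc, diagonal_comp_mul_incidence, Matrix.neg_mul, Matrix.mul_assoc K,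
      ← Matrix.mul_assoc (incidence R σ)ᵀ, incidence_transpose_mul_incidence, ← sub_eq_add_neg,
      Matrix.mul_assoc]
  have hcancel : (1 - K * diagonal (fun k => (fiberCard σ k : R)) * diagonal g⁻¹) * diagonal g =
      diagonal g - K * diagonal (fun k => (fiberCard σ k : R)) := by
    rw [Matrix.sub_mul, Matrix.one_mul, Matrix.mul_assoc (K * _), diagonal_mul_diagonal]
    simp only [hg, diagonal_one, Matrix.mul_one]
  rw [hA, hQ, det_add_mul _ _ hunit, hdet, hinv, hcore, mul_assoc, ← det_diagonal (d := g),
    ← det_mul, hcancel]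

theorem charpoly_diagAddBlockConst_mul_prod [Infinite R] (f : κ → R) (K : Matrix κ κ R) :
    (diagAddBlockConst σ f K).charpoly * ∏ k, (X - C (f k)) =
      (∏ k, (X - C (f k)) ^ fiberCard σ k) * (quotientMatrix σ f K).charpoly := by
  refine eq_of_infinite_eval_eq _ _ ((Set.finite_range f).infinite_compl.mono fun t ht => ?_)
  simp only [Set.mem_ofPred_eq, eval_mul, eval_prod, eval_pow, eval_sub, eval_X, eval_C,
    eval_charpoly]
  exact det_scalar_sub_diagAddBlockConst_mul_prod σ f K t
    fun k hk => ht ⟨k, (sub_eq_zero.1 hk).symm⟩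

end BlockConstant

lemma one_sub_smul_allOnes_eq_diagAddBlockConst {ι κ R : Type*} [DecidableEq ι] [Ring R]
    (σ : ι → κ) (x : R) :
    1 - x • Matrix.of (fun _ _ => (1 : R)) =
      diagAddBlockConst σ 1 (-x • Matrix.of fun _ _ => 1) := by
  ext i j
  simp [diagAddBlockConst, sub_eq_add_neg, one_apply]

lemma one_sub_inv_smul_allOnes_mulVec_one {d : ℕ} {R : Type*} [Field R] (hd : (d : R) ≠ 0) :
    (1 - (d : R)⁻¹ • Matrix.of (fun _ _ => (1 : R)) : Matrix (Fin d) (Fin d) R) *ᵥ (fun _ => 1) =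
      0 := by
  ext i
  simp [mulVec, dotProduct, one_apply, hd]

def blockIndex (d r : ℕ) (i : Fin d) : Fin 2 := if i.val < r then 0 else 1

lemma fiberCard_blockIndex_zero {d r : ℕ} (hr : r ≤ d) : fiberCard (blockIndex d r) 0 = r := by
  simp [fiberCard, blockIndex, Fin.card_filter_val_lt, hr]

lemma fiberCard_blockIndex_one {d r : ℕ} (hr : r ≤ d) :
    fiberCard (blockIndex d r) 1 = d - r := by
  have hsplit := Finset.card_filter_add_card_filter_not (s := (univ : Finset (Fin d)))
    (fun i : Fin d => i.val < r)
  simp [fiberCard, blockIndex, Fin.card_filter_val_lt, hr] at hsplit ⊢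
  omega

lemma diagAddBlockConst_blockIndex_apply {R : Type*} [CommSemiring R] {d : ℕ} (r : ℕ)
    (a b c : R) (j k : Fin d) :
    diagAddBlockConst (blockIndex d r) ![a, c] !![a, b; b, c] j k =
      if j.val < r ∧ k.val < r then (1 + if j = k then (1:R) else 0) * a
      else if r ≤ j.val ∧ r ≤ k.val then (1 + if j = k then (1:R) else 0) * c
      else b := by
  simp only [diagAddBlockConst, Matrix.add_apply, diagonal_apply, submatrix_apply,
    Function.comp_apply, blockIndex]
  split_ifs <;> simp_all <;> first | ring | omega

lemma charpoly_projected_quotientMatrix_blockIndex {d r : ℕ} (hd : d ≠ 0) (hr : r ≤ d)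
    (a b c : ℝ) :
    (quotientMatrix (blockIndex d r) 1 (-(d : ℝ)⁻¹ • Matrix.of fun _ _ => 1) *
      quotientMatrix (blockIndex d r) ![a, c] !![a, b; b, c] *
      quotientMatrix (blockIndex d r) 1 (-(d : ℝ)⁻¹ • Matrix.of fun _ _ => 1)).charpoly =
    X * (X - C ((((r : ℝ) + 1) * ((d : ℝ) - r) * a + (r : ℝ) * ((d : ℝ) - r + 1) * c
      - 2 * r * ((d : ℝ) - r) * b) / d)) := by
  have hfib : (fun k => (fiberCard (blockIndex d r) k : ℝ)) = ![(r : ℝ), d - r] := by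
    funext k
    fin_cases k <;>
      simp [fiberCard_blockIndex_zero hr, fiberCard_blockIndex_one hr, Nat.cast_sub hr]
  set proj :=
    quotientMatrix (blockIndex d r) (1 : Fin 2 → ℝ) (-(d : ℝ)⁻¹ • Matrix.of fun _ _ => 1)
  have hproj : proj.det = 0 := by
    simp [proj, quotientMatrix, hfib, det_fin_two]
    field_simp
    ring
  have htrace : (proj * quotientMatrix (blockIndex d r) ![a, c] !![a, b; b, c] * proj).trace =
      (((r : ℝ) + 1) * ((d : ℝ) - r) * a + (r : ℝ) * ((d : ℝ) - r + 1) * c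
      - 2 * r * ((d : ℝ) - r) * b) / d := by
    simp [proj, quotientMatrix, hfib, trace_fin_two, Matrix.mul_apply, Fin.sum_univ_two,
      vecMul_diagonal]
    field_simp
    ring
  rw [charpoly_fin_two, det_mul, det_mul, hproj, htrace]
  simp only [zero_mul, mul_zero, map_zero, add_zero]
  ring

/-- Eigenvalue computation of Section III.C: with `M` the block pattern matrix
built from `a, b, c` and `P = I - J/d` the projection orthogonal to the
all-ones vector, the characteristic polynomial of `P M P` is
`X (X-a)^{r-1} (X-c)^{d-r-1} (X-β)` with
`β = ((r+1)(d-r)a + r(d-r+1)c - 2r(d-r)b)/d`; in particular the all-ones vector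
is in the kernel of `P M P`. -/
theorem stmt_13 (d r : ℕ) (hd : 2 ≤ d) (hr1 : 1 ≤ r) (hrd : r ≤ d - 1)
    (a b c : ℝ) (M : Matrix (Fin d) (Fin d) ℝ)
    (hM : ∀ j k : Fin d, M j k =
      if j.val < r ∧ k.val < r then (1 + if j = k then (1:ℝ) else 0) * a
      else if r ≤ j.val ∧ r ≤ k.val then (1 + if j = k then (1:ℝ) else 0) * c
      else b)
    (P : Matrix (Fin d) (Fin d) ℝ)
    (hP : P = 1 - ((d : ℝ))⁻¹ • Matrix.of (fun _ _ => (1 : ℝ)))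
    (β : ℝ)
    (hβ : β = (((r : ℝ) + 1) * ((d : ℝ) - r) * a + (r : ℝ) * ((d : ℝ) - r + 1) * c
      - 2 * r * ((d : ℝ) - r) * b) / d) :
    (P * M * P).charpoly =
      X * (X - C a) ^ (r - 1) * (X - C c) ^ (d - r - 1) * (X - C β) ∧
    (P * M * P) *ᵥ (fun _ => (1 : ℝ)) = 0 := by
  have hd0 : d ≠ 0 := by omega
  have hrd' : r ≤ d := by omega
  have hM' : M = diagAddBlockConst (blockIndex d r) ![a, c] !![a, b; b, c] := by
    ext j k
    rw [hM, diagAddBlockConst_blockIndex_apply]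
  have hP' : P = diagAddBlockConst (blockIndex d r) 1 (-(d : ℝ)⁻¹ • Matrix.of fun _ _ => 1) :=
    hP.trans (one_sub_smul_allOnes_eq_diagAddBlockConst _ _)
  refine ⟨?_, ?_⟩
  · have hroots : ∏ k, (X - C ((1 * ![a, c] * 1 : Fin 2 → ℝ) k)) = (X - C a) * (X - C c) := by
      simp [Fin.prod_univ_two]
    have hpows : ∏ k, (X - C ((1 * ![a, c] * 1 : Fin 2 → ℝ) k)) ^ fiberCard (blockIndex d r) k =
        (X - C a) ^ (r - 1) * (X - C a) * ((X - C c) ^ (d - r - 1) * (X - C c)) := by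
      rw [← pow_succ, ← pow_succ, Nat.sub_add_cancel hr1, Nat.sub_add_cancel (by omega : 1 ≤ d - r)]
      simp [Fin.prod_univ_two, fiberCard_blockIndex_zero hrd', fiberCard_blockIndex_one hrd']
    rw [hP', hM', diagAddBlockConst_mul, diagAddBlockConst_mul]
    refine mul_right_cancel₀ (mul_ne_zero (X_sub_C_ne_zero a) (X_sub_C_ne_zero c)) ?_
    rw [← hroots, charpoly_diagAddBlockConst_mul_prod, ← quotientMatrix_mul, ← quotientMatrix_mul,
      charpoly_projected_quotientMatrix_blockIndex hd0 hrd', ← hβ, hroots, hpows]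
    ring
  · rw [← mulVec_mulVec, hP, one_sub_inv_smul_allOnes_mulVec_one (Nat.cast_ne_zero.2 hd0),
      mulVec_zero]
end

section
/- Let m be a natural number and u > 0 a real number. Then ∫₀^{π/2} (cos α)·(sin α)^{2m+1} / ((cos α)² + u) dα = (1/2)·(1+u)^m·ln((1+u)/u) − (1/2)·∑_{n=0}^{m−1} (1+u)^n/(m−n), where the sum is empty (equal to 0) when m = 0. -/
open Real

/-! Writing `sin² α = (1 + u) - (cos² α + u)` gives the recursion
`I (m + 1) = (1 + u) I m - 1 / (2m + 2)` for the integral `I m`, and `-½ log (cos² α + u)` is an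
antiderivative of the integrand of `I 0`. The right-hand side obeys the same recursion: shifting
the summation index multiplies the sum by `1 + u` and produces the new term `1 / (m + 1)`. -/

theorem integral_cos_mul_sin_pow (n : ℕ) :
    ∫ α in (0 : ℝ)..(π / 2), cos α * sin α ^ n = 1 / (n + 1) := by
  have h := integral_sin_pow_mul_cos_pow_odd (a := 0) (b := π / 2) n 0
  simp only [mul_zero, zero_add, pow_one, pow_zero, mul_one, sin_zero, sin_pi_div_two,
    integral_pow] at h
  simpa [mul_comm] using h

theorem integral_cos_mul_sin_div_cos_sq_add (u : ℝ) (hu : 0 < u) :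
    ∫ α in (0 : ℝ)..(π / 2), cos α * sin α / (cos α ^ 2 + u) = 1 / 2 * log ((1 + u) / u) := by
  have hderiv : ∀ α ∈ Set.uIcc (0 : ℝ) (π / 2),
      HasDerivAt (fun x => -(1 / 2) * log (cos x ^ 2 + u))
        (cos α * sin α / (cos α ^ 2 + u)) α := by
    intro α _
    have hpos : 0 < cos α ^ 2 + u := by positivity
    have hsq : HasDerivAt (fun x => cos x ^ 2 + u) (2 * cos α * -sin α) α := by
      simpa using ((hasDerivAt_cos α).fun_pow 2).add_const u
    refine ((hsq.log hpos.ne').const_mul (-(1 / 2) : ℝ)).congr_deriv ?_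
    field_simp
  have hcont : Continuous fun α => cos α * sin α / (cos α ^ 2 + u) :=
    (continuous_cos.mul continuous_sin).div (by fun_prop) fun α => by positivity
  rw [intervalIntegral.integral_eq_sub_of_hasDerivAt hderiv (hcont.intervalIntegrable _ _),
    cos_pi_div_two, cos_zero, log_div (by positivity) hu.ne']
  ring_nf

theorem integral_cos_mul_sin_pow_div_cos_sq_add_succ (m : ℕ) (u : ℝ) (hu : 0 < u) :
    ∫ α in (0 : ℝ)..(π / 2), cos α * sin α ^ (2 * (m + 1) + 1) / (cos α ^ 2 + u) =
      (1 + u) * (∫ α in (0 : ℝ)..(π / 2), cos α * sin α ^ (2 * m + 1) / (cos α ^ 2 + u)) -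
        1 / (2 * m + 2) := by
  have hpointwise : ∀ α : ℝ,
      cos α * sin α ^ (2 * (m + 1) + 1) / (cos α ^ 2 + u) =
        (1 + u) * (cos α * sin α ^ (2 * m + 1) / (cos α ^ 2 + u)) - cos α * sin α ^ (2 * m + 1) := by
    intro α
    have hpos : cos α ^ 2 + u ≠ 0 := by positivity
    have hsin : sin α ^ (2 * (m + 1) + 1) = sin α ^ (2 * m + 1) * (1 - cos α ^ 2) := by
      rw [← sin_sq]; ring
    rw [hsin]
    field_simp
    ring
  have hcont_div : Continuous fun α => cos α * sin α ^ (2 * m + 1) / (cos α ^ 2 + u) :=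
    (continuous_cos.mul (continuous_sin.pow _)).div (by fun_prop) fun α => by positivity
  have hcont_num : Continuous fun α => cos α * sin α ^ (2 * m + 1) := by fun_prop
  simp_rw [hpointwise]
  rw [intervalIntegral.integral_sub ((hcont_div.intervalIntegrable _ _).const_mul _)
      (hcont_num.intervalIntegrable _ _),
    intervalIntegral.integral_const_mul, integral_cos_mul_sin_pow]
  push_cast
  ring

theorem sum_range_succ_pow_div_sub (m : ℕ) (x : ℝ) :
    ∑ n ∈ Finset.range (m + 1), x ^ n / ((m + 1 - n : ℕ) : ℝ) =
      x * ∑ n ∈ Finset.range m, x ^ n / ((m - n : ℕ) : ℝ) + 1 / (m + 1) := by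
  rw [Finset.sum_range_succ', Finset.mul_sum]
  congr 1
  · refine Finset.sum_congr rfl fun n _ => ?_
    rw [Nat.add_sub_add_right, pow_succ, mul_comm, mul_div_assoc]
  · simp

/-- The integral identity Eq. (43) of the paper:
`∫₀^{π/2} cos α (sin α)^{2m+1} / ((cos α)² + u) dα
  = (1/2)(1+u)^m ln((1+u)/u) - (1/2) ∑_{n=0}^{m-1} (1+u)^n/(m-n)` for `u > 0`. -/
theorem stmt_14 (m : ℕ) (u : ℝ) (hu : 0 < u) :
    ∫ α in (0 : ℝ)..(Real.pi / 2),
        Real.cos α * Real.sin α ^ (2 * m + 1) / (Real.cos α ^ 2 + u) =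
      (1 / 2) * (1 + u) ^ m * Real.log ((1 + u) / u) -
        (1 / 2) * ∑ n ∈ Finset.range m, (1 + u) ^ n / ((m - n : ℕ) : ℝ) := by
  induction m with
  | zero => simpa using integral_cos_mul_sin_div_cos_sq_add u hu
  | succ m ih =>
    rw [integral_cos_mul_sin_pow_div_cos_sq_add_succ m u hu, ih, sum_range_succ_pow_div_sub]
    field_simp
    ring
end

section
/- Let x, y, z be real numbers with |x| < 1, |y| < 1 and |z| < 1, and let v₁,…,v₆ ∈ ℝ³ be the six vectors ±e₁, ±e₂, ±e₃ (the vertices of the regular octahedron inscribed in the unit sphere). Then the 3×3 matrix I := (1/6)·∑_{k=1}^{6} v_k v_kᵀ / (1 + v_k·s), with s = (x,y,z), equals (1/3)·diag(1/(1−x²), 1/(1−y²), 1/(1−z²)); consequently I is invertible with I⁻¹ = 3·diag(1−x², 1−y², 1−z²), and tr(I⁻¹) = 3·(3 − x² − y² − z²). -/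
set_option maxHeartbeats 1000000


open Matrix
open scoped BigOperators

/-- Fisher information of the qubit MUB (octahedron) measurement in Bloch
coordinates: with the six octahedron vertices `±e₁, ±e₂, ±e₃`,
`I(s) = (1/6) ∑ₖ vₖvₖᵀ/(1 + vₖ·s) = (1/3) diag(1/(1-x²), 1/(1-y²), 1/(1-z²))`,
which is invertible with `I⁻¹ = 3 diag(1-x², 1-y², 1-z²)` and
`tr(I⁻¹) = 3(3 - x² - y² - z²)`. -/
theorem stmt_17 (x y z : ℝ) (hx : |x| < 1) (hy : |y| < 1) (hz : |z| < 1)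
    (v : Fin 6 → Fin 3 → ℝ)
    (hv : v = ![![1,0,0], ![-1,0,0], ![0,1,0], ![0,-1,0], ![0,0,1], ![0,0,-1]])
    (s : Fin 3 → ℝ) (hs : s = ![x, y, z])
    (Imat : Matrix (Fin 3) (Fin 3) ℝ)
    (hI : Imat = (1/6 : ℝ) • ∑ k, (1 + v k ⬝ᵥ s)⁻¹ • vecMulVec (v k) (v k)) :
    Imat = (1/3 : ℝ) •
      diagonal ![(1 - x^2)⁻¹, (1 - y^2)⁻¹, (1 - z^2)⁻¹] ∧
    IsUnit Imat.det ∧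
    Imat⁻¹ = (3 : ℝ) • diagonal ![1 - x^2, 1 - y^2, 1 - z^2] ∧
    Imat⁻¹.trace = 3 * (3 - x^2 - y^2 - z^2) := by
  rw [abs_lt] at hx hy hz
  have hx1 : 1 + x ≠ 0 := by nlinarith
  have hx2 : 1 - x ≠ 0 := by nlinarith
  have hy1 : 1 + y ≠ 0 := by nlinarith
  have hy2 : 1 - y ≠ 0 := by nlinarith
  have hz1 : 1 + z ≠ 0 := by nlinarith
  have hz2 : 1 - z ≠ 0 := by nlinarith
  have hx2' : 1 + -x ≠ 0 := by nlinarith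
  have hy2' : 1 + -y ≠ 0 := by nlinarith
  have hz2' : 1 + -z ≠ 0 := by nlinarith
  have hx3 : 1 - x^2 ≠ 0 := by nlinarith
  have hy3 : 1 - y^2 ≠ 0 := by nlinarith
  have hz3 : 1 - z^2 ≠ 0 := by nlinarith
  have hmain : Imat = (1/3 : ℝ) •
      diagonal ![(1 - x^2)⁻¹, (1 - y^2)⁻¹, (1 - z^2)⁻¹] := by
    subst hv hs
    have e5 : (![![(1:ℝ),0,0], ![-1,0,0], ![0,1,0], ![0,-1,0], ![0,0,1], ![0,0,-1]]) 5
        = ![0,0,-1] := rfl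
    simp only [Fin.sum_univ_six, e5, Matrix.cons_val_zero, Matrix.cons_val_one,
      Matrix.head_cons, Matrix.cons_val_two, Matrix.tail_cons, Matrix.cons_val_three,
      Matrix.cons_val_four, dotProduct, Fin.sum_univ_three] at hI
    rw [hI]
    ext i j
    fin_cases i <;> fin_cases j <;>
      simp [vecMulVec_apply, diagonal] <;> field_simp <;> ring
  refine ⟨hmain, ?_, ?_, ?_⟩
  · rw [hmain]
    simp only [det_smul, det_diagonal, Fin.prod_univ_three, Matrix.cons_val_zero,
      Matrix.cons_val_one, Matrix.head_cons, Matrix.cons_val_two, Matrix.tail_cons,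
      smul_eq_mul, isUnit_iff_ne_zero]
    positivity
  · apply Matrix.inv_eq_right_inv
    rw [hmain]
    ext i j
    fin_cases i <;> fin_cases j <;>
      simp [Matrix.mul_apply, Fin.sum_univ_three, diagonal, Matrix.one_apply] <;>
      field_simp
  · have hinv : Imat⁻¹ = (3 : ℝ) • diagonal ![1 - x^2, 1 - y^2, 1 - z^2] := by
      apply Matrix.inv_eq_right_inv
      rw [hmain]
      ext i j
      fin_cases i <;> fin_cases j <;>
        simp [Matrix.mul_apply, Fin.sum_univ_three, diagonal, Matrix.one_apply] <;>
        field_simp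
    rw [hinv]
    simp [Matrix.trace, Fin.sum_univ_three, diagonal]
    ring
end
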